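/- arXiv:1309.0560 — 3 statements merged into one kernel-verified Lean document; each statement's English description precedes it below -/
import Mathlib

section
/- Let H = V + Δ be a discrete Schrödinger operator on ℓ²(ℤ) with bounded potential, N ≥ 2 an integer, and ε > 0. Then there exists an interval I ⊂ ℤ of length N and an eigenvalue E' of H_I such that E' > sup(Spec H) - 2/N - ε. -/
set_option maxHeartbeats 1000000
set_option synthInstance.maxHeartbeats 400000

noncomputable section

abbrev l2Z := lp (fun _ : ℤ => ℝ) 2

def jacobi (V : ℤ → ℝ) (a : ℤ) (N : ℕ) : Matrix (Fin N) (Fin N) ℝ :=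
  fun i j =>
    if (i : ℕ) = (j : ℕ) then V (a + (i : ℕ))
    else if (i : ℕ) + 1 = (j : ℕ) ∨ (j : ℕ) + 1 = (i : ℕ) then 1 else 0

open scoped InnerProductSpace
open Finset Matrix

lemma inner_l2 (u w : l2Z) : ⟪u, w⟫_ℝ = ∑' n, u n * w n := by
  rw [lp.inner_eq_tsum]; simp [RCLike.inner_apply]
  exact tsum_congr fun n => mul_comm _ _

lemma sq_summable (u : l2Z) : Summable (fun n : ℤ => (u n)^2) := by
  have := lp.summable_inner (𝕜 := ℝ) u u
  simpa [RCLike.inner_apply, sq] using this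

lemma norm_sq_l2 (u : l2Z) : ‖u‖^2 = ∑' n, (u n)^2 := by
  rw [← real_inner_self_eq_norm_sq, lp.inner_eq_tsum]; simp [RCLike.inner_apply, sq]

lemma summable_shift {f : ℤ → ℝ} (hf : Summable f) (k : ℤ) : Summable (fun n => f (n + k)) :=
  ((Equiv.addRight k).summable_iff (f := f)).2 hf

lemma tsum_shift (f : ℤ → ℝ) (k : ℤ) : ∑' n, f (n + k) = ∑' n, f n :=
  (Equiv.addRight k).tsum_eq f

lemma abs_mul_le_half_sq (a b : ℝ) : |a * b| ≤ (a^2 + b^2)/2 := by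
  nlinarith [sq_nonneg (|a| - |b|), sq_abs a, sq_abs b, abs_mul a b, abs_nonneg a, abs_nonneg b]

lemma summable_abs_mul_sq {f g : ℤ → ℝ} (hf : Summable (fun n => (f n)^2))
    (hg : Summable (fun n => (g n)^2)) : Summable (fun n => |f n * g n|) := by
  have h2 : Summable (fun n => ((f n)^2 + (g n)^2)/2) := (hf.add hg).div_const 2
  exact h2.of_nonneg_of_le (fun n => abs_nonneg _) (fun n => abs_mul_le_half_sq _ _)

lemma summable_mul_sq {f g : ℤ → ℝ} (hf : Summable (fun n => (f n)^2))
    (hg : Summable (fun n => (g n)^2)) : Summable (fun n => f n * g n) :=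
  (summable_abs_mul_sq hf hg).of_abs

lemma abs_tsum_mul_le (u : l2Z) (k : ℤ) :
    |∑' n, u n * u (n + k)| ≤ ‖u‖^2 := by
  have h1 : Summable (fun n : ℤ => (u (n + k))^2) := summable_shift (sq_summable u) k
  have habs : Summable (fun n : ℤ => |u n * u (n + k)|) := summable_abs_mul_sq (sq_summable u) h1
  calc |∑' n, u n * u (n + k)| ≤ ∑' n, |u n * u (n + k)| := by
        simpa only [Real.norm_eq_abs] using norm_tsum_le_tsum_norm (f := fun n : ℤ => u n * u (n + k)) (by simpa only [Real.norm_eq_abs] using habs)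
      _ ≤ ∑' n, ((u n)^2 + (u (n+k))^2)/2 := by
        exact Summable.tsum_le_tsum (fun n => abs_mul_le_half_sq _ _) habs (((sq_summable u).add h1).div_const 2)
      _ = ‖u‖^2 := by
        rw [tsum_div_const, Summable.tsum_add (sq_summable u) h1, tsum_shift (fun n => (u n)^2) k,
          norm_sq_l2 u]
        ring

lemma sq_summable_shift (u : l2Z) (k : ℤ) : Summable (fun n : ℤ => (u (n + k))^2) :=
  summable_shift (sq_summable u) k

lemma summable_V_mul {V : ℤ → ℝ} {C : ℝ} (hC : ∀ n, |V n| ≤ C) (u w : l2Z) :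
    Summable (fun n => V n * (u n * w n)) := by
  apply Summable.of_abs
  apply Summable.of_nonneg_of_le (fun n => abs_nonneg _)
    (fun n => ?_) (((summable_abs_mul_sq (sq_summable u) (sq_summable w))).mul_left C)
  rw [abs_mul]
  have h1 : |V n| ≤ C := hC n
  have h2 : (0:ℝ) ≤ |u n * w n| := abs_nonneg _
  nlinarith

lemma summable_shift_mul (u w : l2Z) (k : ℤ) : Summable (fun n => u (n + k) * w n) :=
  summable_mul_sq (sq_summable_shift u k) (sq_summable w)

lemma summable_sub_one_mul (u w : l2Z) : Summable (fun n => u (n - 1) * w n) := by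
  have := summable_shift_mul u w (-1)
  simpa [sub_eq_add_neg] using this

lemma summable_add_one_mul (u w : l2Z) : Summable (fun n => u (n + 1) * w n) :=
  summable_shift_mul u w 1

lemma inner_H {V : ℤ → ℝ} {C : ℝ} (hC : ∀ n, |V n| ≤ C) (H : l2Z →L[ℝ] l2Z)
    (hH : ∀ u : l2Z, ∀ n : ℤ, H u n = V n * u n + u (n + 1) + u (n - 1)) (u w : l2Z) :
    ⟪H u, w⟫_ℝ = (∑' n, V n * (u n * w n)) + (∑' n, u (n+1) * w n) + (∑' n, u (n-1) * w n) := by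
  rw [inner_l2]
  have he : ∀ n : ℤ, (H u) n * w n = V n * (u n * w n) + (u (n+1) * w n + u (n-1) * w n) := by
    intro n; rw [hH]; ring
  rw [tsum_congr he, Summable.tsum_add (summable_V_mul hC u w)
    ((summable_add_one_mul u w).add (summable_sub_one_mul u w)),
    Summable.tsum_add (summable_add_one_mul u w) (summable_sub_one_mul u w), ← add_assoc]

lemma H_symm {V : ℤ → ℝ} {C : ℝ} (hC : ∀ n, |V n| ≤ C) (H : l2Z →L[ℝ] l2Z)
    (hH : ∀ u : l2Z, ∀ n : ℤ, H u n = V n * u n + u (n + 1) + u (n - 1)) (u w : l2Z) :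
    ⟪H u, w⟫_ℝ = ⟪u, H w⟫_ℝ := by
  rw [real_inner_comm (H w) u, inner_H hC H hH u w, inner_H hC H hH w u]
  have e1 : (∑' n, V n * (u n * w n)) = ∑' n, V n * (w n * u n) := by
    apply tsum_congr; intro n; ring
  have e2 : (∑' n, u (n+1) * w n) = ∑' n, w (n-1) * u n := by
    have := tsum_shift (fun n => u n * w (n - 1)) 1
    simp only [add_sub_cancel_right] at this
    rw [this]
    exact tsum_congr fun n => mul_comm _ _
  have e3 : (∑' n, u (n-1) * w n) = ∑' n, w (n+1) * u n := by
    have := tsum_shift (fun n => w n * u (n - 1)) 1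
    simp only [add_sub_cancel_right] at this
    rw [this]
    exact tsum_congr fun n => mul_comm _ _
  rw [e1, e2, e3]; ring

lemma jacobi_isHermitian (V : ℤ → ℝ) (a : ℤ) (N : ℕ) : (jacobi V a N).IsHermitian := by
  unfold Matrix.IsHermitian
  ext i j
  simp only [Matrix.conjTranspose_apply, jacobi, star_trivial]
  split_ifs <;> first | rfl | (exfalso; omega) | (congr 1; omega)

lemma sum_if_succ_lt (N : ℕ) (g : ℕ → ℝ) :
    ∑ i ∈ range N, (if i + 1 < N then g i else 0) = ∑ i ∈ range (N-1), g i := by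
  rw [← Finset.sum_filter]
  apply Finset.sum_congr _ (fun _ _ => rfl)
  ext x
  simp only [Finset.mem_filter, Finset.mem_range]
  omega

lemma jacobi_form (V : ℤ → ℝ) (a : ℤ) (N : ℕ) (f : ℕ → ℝ) :
    (fun i : Fin N => f i) ⬝ᵥ (jacobi V a N *ᵥ fun i : Fin N => f i)
      = ∑ i ∈ range N, V (a + (i:ℤ)) * (f i)^2
        + 2 * ∑ i ∈ range (N-1), f i * f (i+1) := by
  have step1 : (fun i : Fin N => f i) ⬝ᵥ (jacobi V a N *ᵥ fun i : Fin N => f i)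
      = ∑ i ∈ range N, ∑ j ∈ range N,
          ((if i = j then V (a + (i:ℤ)) * (f i * f j) else 0)
            + ((if i + 1 = j then f i * f j else 0) + (if j + 1 = i then f i * f j else 0))) := by
    unfold dotProduct Matrix.mulVec dotProduct
    have inner_eq : ∀ i : Fin N, (∑ j : Fin N, jacobi V a N i j * f j)
        = ∑ j ∈ range N, (if (i:ℕ) = j then V (a + (i:ℤ)) else if (i:ℕ)+1 = j ∨ j+1 = (i:ℕ) then 1 else 0) * f j := by
      intro i
      exact Fin.sum_univ_eq_sum_range (fun j => (if (i:ℕ) = j then V (a + (i:ℤ)) else if (i:ℕ)+1 = j ∨ j+1 = (i:ℕ) then 1 else 0) * f j) N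
    calc ∑ i : Fin N, f i * ∑ j : Fin N, jacobi V a N i j * f j
        = ∑ i : Fin N, f i * ∑ j ∈ range N, (if (i:ℕ) = j then V (a + (i:ℤ)) else if (i:ℕ)+1 = j ∨ j+1 = (i:ℕ) then 1 else 0) * f j := by
          exact Finset.sum_congr rfl (fun i _ => by rw [inner_eq i])
      _ = ∑ i ∈ range N, f i * ∑ j ∈ range N, (if i = j then V (a + (i:ℤ)) else if i+1 = j ∨ j+1 = i then 1 else 0) * f j :=
          Fin.sum_univ_eq_sum_range (fun i => f i * ∑ j ∈ range N, (if i = j then V (a + (i:ℤ)) else if i+1 = j ∨ j+1 = i then 1 else 0) * f j) N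
      _ = ∑ i ∈ range N, ∑ j ∈ range N,
          ((if i = j then V (a + (i:ℤ)) * (f i * f j) else 0)
            + ((if i + 1 = j then f i * f j else 0) + (if j + 1 = i then f i * f j else 0))) := by
          apply Finset.sum_congr rfl; intro i _
          rw [Finset.mul_sum]
          apply Finset.sum_congr rfl; intro j _
          split_ifs <;> first | (exfalso; omega) | ring
  rw [step1]
  have split := fun (F G : ℕ → ℕ → ℝ) (s : Finset ℕ) =>
    Finset.sum_congr (rfl : s = s) (fun i (_ : i ∈ s) => Finset.sum_add_distrib (s := s)
      (f := fun j => F i j) (g := fun j => G i j))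
  rw [Finset.sum_congr rfl (fun i _ => Finset.sum_add_distrib), Finset.sum_add_distrib,
      Finset.sum_congr rfl (fun i _ => Finset.sum_add_distrib (s := range N)), Finset.sum_add_distrib]
  have T1 : ∑ i ∈ range N, ∑ j ∈ range N, (if i = j then V (a + (i:ℤ)) * (f i * f j) else 0)
      = ∑ i ∈ range N, V (a + (i:ℤ)) * (f i)^2 := by
    apply Finset.sum_congr rfl; intro i hi
    rw [Finset.sum_ite_eq (range N) i (fun j => V (a + (i:ℤ)) * (f i * f j)), if_pos hi]
    ring
  have T2 : ∑ i ∈ range N, ∑ j ∈ range N, (if i + 1 = j then f i * f j else 0)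
      = ∑ i ∈ range (N-1), f i * f (i+1) := by
    rw [Finset.sum_congr rfl (fun i (_ : i ∈ range N) =>
      Finset.sum_ite_eq (range N) (i+1) (fun j => f i * f j))]
    simp only [Finset.mem_range]
    exact sum_if_succ_lt N (fun i => f i * f (i+1))
  have T3 : ∑ i ∈ range N, ∑ j ∈ range N, (if j + 1 = i then f i * f j else 0)
      = ∑ i ∈ range (N-1), f (i+1) * f i := by
    rw [Finset.sum_comm]
    rw [Finset.sum_congr rfl (fun j (_ : j ∈ range N) =>
      Finset.sum_ite_eq (range N) (j+1) (fun i => f i * f j))]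
    simp only [Finset.mem_range]
    exact sum_if_succ_lt N (fun j => f (j+1) * f j)
  rw [T1, T2, T3]
  have : ∑ i ∈ range (N-1), f (i+1) * f i = ∑ i ∈ range (N-1), f i * f (i+1) :=
    Finset.sum_congr rfl (fun i _ => mul_comm _ _)
  rw [this]; ring

lemma matrix_rayleigh {N : ℕ} (hN : 0 < N) (A : Matrix (Fin N) (Fin N) ℝ)
    (hA : A.IsHermitian) (w : Fin N → ℝ) :
    w ⬝ᵥ A *ᵥ w ≤ (⨆ i, hA.eigenvalues i) * (w ⬝ᵥ w) := by
  haveI : Nonempty (Fin N) := Fin.pos_iff_nonempty.1 hN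
  set U : Matrix (Fin N) (Fin N) ℝ := (hA.eigenvectorUnitary : Matrix (Fin N) (Fin N) ℝ) with hUdef
  have hstar : star U = Uᵀ := by
    ext i j
    simp [Matrix.star_apply]
  have hunit : U * Uᵀ = 1 := by
    have h2 := hA.eigenvectorUnitary.2.2
    rwa [hstar] at h2
  have hdiag : A = U * Matrix.diagonal hA.eigenvalues * Uᵀ := by
    have h := hA.spectral_theorem
    rw [Unitary.conjStarAlgAut_apply, ← hUdef, hstar] at h
    simpa [Function.comp] using h
  have key : w ⬝ᵥ A *ᵥ w = ∑ i, hA.eigenvalues i * ((Uᵀ *ᵥ w) i)^2 := by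
    calc w ⬝ᵥ A *ᵥ w = w ⬝ᵥ (U *ᵥ (Matrix.diagonal hA.eigenvalues *ᵥ (Uᵀ *ᵥ w))) := by
          conv_lhs => rw [hdiag, ← Matrix.mulVec_mulVec, ← Matrix.mulVec_mulVec]
      _ = (w ᵥ* U) ⬝ᵥ (Matrix.diagonal hA.eigenvalues *ᵥ (Uᵀ *ᵥ w)) :=
          Matrix.dotProduct_mulVec _ _ _
      _ = (Uᵀ *ᵥ w) ⬝ᵥ (Matrix.diagonal hA.eigenvalues *ᵥ (Uᵀ *ᵥ w)) := by
          rw [← Matrix.mulVec_transpose]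
      _ = ∑ i, hA.eigenvalues i * ((Uᵀ *ᵥ w) i)^2 := by
          unfold dotProduct
          exact Finset.sum_congr rfl (fun i _ => by rw [Matrix.mulVec_diagonal]; ring)
  have hww : w ⬝ᵥ w = ∑ i, ((Uᵀ *ᵥ w) i)^2 := by
    calc w ⬝ᵥ w = w ⬝ᵥ ((U * Uᵀ) *ᵥ w) := by rw [hunit, Matrix.one_mulVec]
      _ = w ⬝ᵥ (U *ᵥ (Uᵀ *ᵥ w)) := by simp only [Matrix.mulVec_mulVec]
      _ = (w ᵥ* U) ⬝ᵥ (Uᵀ *ᵥ w) := Matrix.dotProduct_mulVec _ _ _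
      _ = (Uᵀ *ᵥ w) ⬝ᵥ (Uᵀ *ᵥ w) := by rw [← Matrix.mulVec_transpose]
      _ = ∑ i, ((Uᵀ *ᵥ w) i)^2 := Finset.sum_congr rfl (fun i _ => (sq _).symm)
  rw [key, hww, Finset.mul_sum]
  apply Finset.sum_le_sum
  intro i _
  have h1 : hA.eigenvalues i ≤ ⨆ j, hA.eigenvalues j :=
    le_ciSup (Set.Finite.bddAbove (Set.finite_range _)) i
  nlinarith [sq_nonneg ((Uᵀ *ᵥ w) i)]

def lammax (V : ℤ → ℝ) (a : ℤ) (N : ℕ) : ℝ :=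
  ⨆ i, (jacobi_isHermitian V a N).eigenvalues i

-- dot product of basis vector with itself is 1
lemma euclid_dot_self {N : ℕ} (x : EuclideanSpace ℝ (Fin N)) (h : ‖x‖ = 1) :
    (⇑x : Fin N → ℝ) ⬝ᵥ (⇑x : Fin N → ℝ) = 1 := by
  have h2 : (inner ℝ x x : ℝ) = 1 := by
    rw [real_inner_self_eq_norm_sq, h]; norm_num
  rw [← h2, PiLp.inner_apply]
  simp [RCLike.inner_apply, dotProduct, sq]

-- quadratic-form bound for jacobi
lemma jacobi_quad_le (V : ℤ → ℝ) (C : ℝ) (hC : ∀ n, |V n| ≤ C) (a : ℤ) (N : ℕ) (hN : 1 ≤ N)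
    (f : ℕ → ℝ) :
    (fun i : Fin N => f i) ⬝ᵥ (jacobi V a N *ᵥ fun i : Fin N => f i)
      ≤ (C + 2) * ∑ i ∈ range N, (f i)^2 := by
  rw [jacobi_form]
  have hsq : ∀ i, (0:ℝ) ≤ (f i)^2 := fun i => sq_nonneg _
  have A1 : ∑ i ∈ range N, V (a + (i:ℤ)) * (f i)^2 ≤ C * ∑ i ∈ range N, (f i)^2 := by
    rw [Finset.mul_sum]
    apply Finset.sum_le_sum
    intro i _
    have := hC (a + (i:ℤ))
    have := abs_le.1 this
    nlinarith [sq_nonneg (f i)]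
  have A2a : ∑ i ∈ range (N-1), (f i)^2 ≤ ∑ i ∈ range N, (f i)^2 :=
    Finset.sum_le_sum_of_subset_of_nonneg (Finset.range_subset_range.2 (Nat.sub_le N 1))
      (fun i _ _ => sq_nonneg _)
  have A2b : ∑ i ∈ range (N-1), (f (i+1))^2 ≤ ∑ i ∈ range N, (f i)^2 := by
    have hNs : N - 1 + 1 = N := Nat.succ_pred_eq_of_pos hN
    have := Finset.sum_range_succ' (fun i => (f i)^2) (N-1)
    rw [hNs] at this
    rw [this]
    nlinarith [sq_nonneg (f 0)]
  have A2 : 2 * ∑ i ∈ range (N-1), f i * f (i+1) ≤ 2 * ∑ i ∈ range N, (f i)^2 := by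
    have h1 : 2 * ∑ i ∈ range (N-1), f i * f (i+1)
        = ∑ i ∈ range (N-1), 2 * (f i * f (i+1)) := by rw [Finset.mul_sum]
    have h2 : ∑ i ∈ range (N-1), 2 * (f i * f (i+1))
        ≤ ∑ i ∈ range (N-1), ((f i)^2 + (f (i+1))^2) := by
      apply Finset.sum_le_sum
      intro i _
      nlinarith [sq_nonneg (f i - f (i+1))]
    rw [h1]
    calc ∑ i ∈ range (N-1), 2 * (f i * f (i+1))
        ≤ ∑ i ∈ range (N-1), ((f i)^2 + (f (i+1))^2) := h2
      _ = ∑ i ∈ range (N-1), (f i)^2 + ∑ i ∈ range (N-1), (f (i+1))^2 :=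
          Finset.sum_add_distrib
      _ ≤ 2 * ∑ i ∈ range N, (f i)^2 := by linarith
  linarith

lemma fin_fun_of_dite {N : ℕ} (x : EuclideanSpace ℝ (Fin N)) :
    (fun j : Fin N => (fun n : ℕ => if h : n < N then x ⟨n, h⟩ else 0) (j : ℕ)) = ⇑x := by
  funext j
  simp [j.isLt]

lemma eigen_le (V : ℤ → ℝ) (C : ℝ) (hC : ∀ n, |V n| ≤ C) (a : ℤ) (N : ℕ) (hN : 1 ≤ N)
    (i : Fin N) : (jacobi_isHermitian V a N).eigenvalues i ≤ C + 2 := by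
  set hA := jacobi_isHermitian V a N
  set b := hA.eigenvectorBasis
  set f : ℕ → ℝ := fun n => if h : n < N then b i ⟨n, h⟩ else 0 with hf
  have hfb : (fun j : Fin N => f (j : ℕ)) = ⇑(b i) := fin_fun_of_dite (b i)
  have hnorm : ‖b i‖ = 1 := b.orthonormal.1 i
  have hdot : (⇑(b i) : Fin N → ℝ) ⬝ᵥ ⇑(b i) = 1 := euclid_dot_self _ hnorm
  have hsum : ∑ n ∈ range N, (f n)^2 = 1 := by
    rw [← hdot, ← hfb]
    rw [← Fin.sum_univ_eq_sum_range (fun n => (f n)^2) N]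
    simp [dotProduct, sq]
  have heig : jacobi V a N *ᵥ ⇑(b i) = hA.eigenvalues i • ⇑(b i) :=
    hA.mulVec_eigenvectorBasis i
  have hq : (⇑(b i) : Fin N → ℝ) ⬝ᵥ (jacobi V a N *ᵥ ⇑(b i)) = hA.eigenvalues i := by
    rw [heig, dotProduct_smul, hdot]
    simp
  have hb := jacobi_quad_le V C hC a N hN f
  rw [hfb, hq, hsum, mul_one] at hb
  exact hb

lemma lammax_le (V : ℤ → ℝ) (C : ℝ) (hC : ∀ n, |V n| ≤ C) (a : ℤ) (N : ℕ) (hN : 1 ≤ N) :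
    lammax V a N ≤ C + 2 := by
  haveI : Nonempty (Fin N) := Fin.pos_iff_nonempty.1 hN
  exact ciSup_le (fun i => eigen_le V C hC a N hN i)

lemma jacobi_exists_top (V : ℤ → ℝ) (a : ℤ) (N : ℕ) (hN : 1 ≤ N) :
    ∃ v : Fin N → ℝ, v ≠ 0 ∧ (jacobi V a N).mulVec v = lammax V a N • v := by
  haveI : Nonempty (Fin N) := Fin.pos_iff_nonempty.1 hN
  set hA := jacobi_isHermitian V a N
  obtain ⟨i₀, _, hmax⟩ := Finset.exists_max_image Finset.univ hA.eigenvalues ⟨_, Finset.mem_univ (Classical.arbitrary (Fin N))⟩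
  have htop : lammax V a N = hA.eigenvalues i₀ := by
    apply le_antisymm
    · exact ciSup_le (fun i => hmax i (Finset.mem_univ i))
    · exact le_ciSup (Set.Finite.bddAbove (Set.finite_range _)) i₀
  refine ⟨⇑(hA.eigenvectorBasis i₀), ?_, ?_⟩
  · intro h0
    apply hA.eigenvectorBasis.orthonormal.ne_zero i₀
    apply PiLp.ext
    intro j
    have := congrFun h0 j
    simpa using this
  · rw [htop]
    exact hA.mulVec_eigenvectorBasis i₀

lemma summable_window {f : ℤ → ℝ} (hf : Summable f) (K : ℕ) :
    Summable (fun a : ℤ => ∑ i ∈ range K, f (a + (i:ℤ))) :=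
  summable_sum (fun i _ => summable_shift hf (i:ℤ))

lemma tsum_window {f : ℤ → ℝ} (hf : Summable f) (K : ℕ) :
    ∑' a : ℤ, ∑ i ∈ range K, f (a + (i:ℤ)) = (K:ℝ) * ∑' n, f n := by
  rw [Summable.tsum_finsetSum (f := fun (i:ℕ) (a:ℤ) => f (a + (i:ℤ))) (fun i _ => summable_shift hf (i:ℤ)),
    Finset.sum_congr (rfl : range K = range K) (fun i _ => tsum_shift f (i:ℤ))]
  simp [Finset.sum_const, nsmul_eq_mul]

lemma quad_bound (V : ℤ → ℝ) (C : ℝ) (hC : ∀ n, |V n| ≤ C) (H : l2Z →L[ℝ] l2Z)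
    (hH : ∀ u : l2Z, ∀ n : ℤ, H u n = V n * u n + u (n + 1) + u (n - 1))
    (N : ℕ) (hN : 2 ≤ N) (u : l2Z) :
    ⟪H u, u⟫_ℝ ≤ ((⨆ a : ℤ, lammax V a N) + 2/(N:ℝ)) * ‖u‖^2 := by
  set M := ⨆ a : ℤ, lammax V a N with hM
  have hNpos : 0 < N := by omega
  have hN0 : (0:ℝ) < N := by exact_mod_cast hNpos
  have hsq := sq_summable u
  have hF1 : Summable (fun n : ℤ => V n * (u n)^2) := by
    have := summable_V_mul hC u u
    simpa [sq] using this
  have hG : Summable (fun n : ℤ => u n * u (n+1)) :=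
    summable_mul_sq hsq (summable_shift hsq 1)
  set D := ∑' n, V n * (u n)^2 with hD
  set S := ∑' n, u n * u (n+1) with hS
  have hinner : ⟪H u, u⟫_ℝ = D + 2 * S := by
    rw [inner_H hC H hH u u]
    have e1 : (∑' (n:ℤ), V n * (u n * u n)) = D := tsum_congr (fun n => by rw [sq])
    have e2 : (∑' (n:ℤ), u (n+1) * u n) = S := tsum_congr (fun n => mul_comm _ _)
    have e3 : (∑' (n:ℤ), u (n-1) * u n) = S := by
      have h := tsum_shift (fun n => u (n-1) * u n) 1
      simp only [add_sub_cancel_right] at h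
      exact h.symm
    rw [e1, e2, e3]; ring
  set Q : ℤ → ℝ := fun a => ∑ i ∈ range N, V (a + (i:ℤ)) * (u (a + (i:ℤ)))^2
      + 2 * ∑ i ∈ range (N-1), u (a + (i:ℤ)) * u (a + (i:ℤ) + 1) with hQdef
  set R : ℤ → ℝ := fun a => ∑ i ∈ range N, (u (a + (i:ℤ)))^2 with hRdef
  have hRnonneg : ∀ a, 0 ≤ R a := fun a => Finset.sum_nonneg (fun i _ => sq_nonneg _)
  have hbddlam : BddAbove (Set.range (fun a : ℤ => lammax V a N)) := by
    refine ⟨C + 2, ?_⟩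
    rintro x ⟨b, rfl⟩
    exact lammax_le V C hC b N (by omega)
  have hlam_le : ∀ a : ℤ, lammax V a N ≤ M := fun a => le_ciSup hbddlam a
  have hQle : ∀ a, Q a ≤ M * R a := by
    intro a
    set f : ℕ → ℝ := fun n => u (a + (n:ℤ)) with hfdef
    have hform := jacobi_form V a N f
    have hsecond : ∑ i ∈ range (N-1), f i * f (i+1)
        = ∑ i ∈ range (N-1), u (a + (i:ℤ)) * u (a + (i:ℤ) + 1) := by
      apply Finset.sum_congr rfl
      intro i _
      have : a + ((i:ℕ)+1 : ℕ) = a + (i:ℤ) + 1 := by push_cast; ring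
      rw [hfdef]
      simp only []
      rw [this]
    have hQa : (fun i : Fin N => f (i:ℕ)) ⬝ᵥ (jacobi V a N *ᵥ fun i : Fin N => f (i:ℕ)) = Q a := by
      rw [hform, hsecond]
    have hww : (fun i : Fin N => f (i:ℕ)) ⬝ᵥ (fun i : Fin N => f (i:ℕ)) = R a := by
      have h1 : (fun i : Fin N => f (i:ℕ)) ⬝ᵥ (fun i : Fin N => f (i:ℕ))
          = ∑ i ∈ range N, f i * f i := by
        rw [← Fin.sum_univ_eq_sum_range (fun n => f n * f n) N]
        rfl
      rw [h1, hRdef]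
      exact Finset.sum_congr rfl (fun i _ => (sq (f i)).symm)
    have hray := matrix_rayleigh hNpos (jacobi V a N) (jacobi_isHermitian V a N)
      (fun i : Fin N => f (i:ℕ))
    rw [hQa, hww] at hray
    calc Q a ≤ lammax V a N * R a := hray
      _ ≤ M * R a := mul_le_mul_of_nonneg_right (hlam_le a) (hRnonneg a)
  have hQs1 : Summable (fun a : ℤ => ∑ i ∈ range N, V (a + (i:ℤ)) * (u (a + (i:ℤ)))^2) :=
    summable_window hF1 N
  have hQs2 : Summable (fun a : ℤ => ∑ i ∈ range (N-1), u (a + (i:ℤ)) * u (a + (i:ℤ) + 1)) := by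
    have := summable_window hG (N-1)
    apply this.congr
    intro a
    apply Finset.sum_congr rfl
    intro i _
    ring_nf
  have hQsummable : Summable Q := hQs1.add (hQs2.mul_left 2)
  have hRsummable : Summable R := summable_window hsq N
  have htsumQ : ∑' a, Q a = (N:ℝ) * D + 2 * (((N:ℝ) - 1) * S) := by
    rw [hQdef]
    rw [Summable.tsum_add hQs1 (hQs2.mul_left 2), tsum_window hF1 N, tsum_mul_left]
    have h2 : ∑' a : ℤ, ∑ i ∈ range (N-1), u (a + (i:ℤ)) * u (a + (i:ℤ) + 1)
        = ((N-1 : ℕ):ℝ) * S := by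
      rw [← tsum_window hG (N-1)]
    rw [h2]
    have : ((N-1 : ℕ):ℝ) = (N:ℝ) - 1 := by
      have : 1 ≤ N := by omega
      push_cast [Nat.cast_sub this]
      ring
    rw [this]
  have htsumR : ∑' a, R a = (N:ℝ) * ‖u‖^2 := by
    rw [hRdef, tsum_window hsq N, norm_sq_l2]
  have hmain : (N:ℝ) * D + 2 * (((N:ℝ) - 1) * S) ≤ M * ((N:ℝ) * ‖u‖^2) := by
    rw [← htsumQ, ← htsumR, ← tsum_mul_left]
    exact Summable.tsum_le_tsum hQle hQsummable (hRsummable.mul_left M)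
  have hs2 : S ≤ ‖u‖^2 := le_trans (le_abs_self S) (abs_tsum_mul_le u 1)
  rw [hinner]
  rw [show (M + 2/(N:ℝ)) * ‖u‖^2 = (M * ((N:ℝ) * ‖u‖^2) + 2 * ‖u‖^2) / N by field_simp]
  rw [le_div_iff₀ hN0]
  have hexp : (D + 2*S) * (N:ℝ) = ((N:ℝ) * D + 2 * (((N:ℝ) - 1) * S)) + 2*S := by ring
  rw [hexp]
  linarith

def bilinT (T : l2Z →L[ℝ] l2Z) : l2Z →L[ℝ] l2Z →L[ℝ] ℝ :=
  LinearMap.mkContinuous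
    { toFun := fun u => (innerSL ℝ (T u) : l2Z →L[ℝ] ℝ)
      map_add' := fun x y => by
        ext w
        simp [inner_add_left]
      map_smul' := fun c x => by
        ext w
        simp [real_inner_smul_left] }
    ‖T‖
    (fun u => by
      calc ‖(innerSL ℝ (T u) : l2Z →L[ℝ] ℝ)‖ = ‖T u‖ := innerSL_apply_norm (𝕜 := ℝ) (T u)
        _ ≤ ‖T‖ * ‖u‖ := T.le_opNorm u)

lemma bilinT_apply (T : l2Z →L[ℝ] l2Z) (u w : l2Z) : bilinT T u w = ⟪T u, w⟫_ℝ := rfl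

lemma isUnit_of_coercive {T : l2Z →L[ℝ] l2Z} (hcoer : IsCoercive (bilinT T)) : IsUnit T := by
  set e := hcoer.continuousLinearEquivOfBilin with he
  have hTe : ∀ u, (e : l2Z →L[ℝ] l2Z) u = T u := by
    intro u
    apply ext_inner_right ℝ
    intro w
    have h1 := hcoer.continuousLinearEquivOfBilin_apply u w
    rw [bilinT_apply] at h1
    exact h1
  have hcoe : (e : l2Z →L[ℝ] l2Z) = T := ContinuousLinearMap.ext hTe
  refine ⟨⟨(e : l2Z →L[ℝ] l2Z), (e.symm : l2Z →L[ℝ] l2Z), ?_, ?_⟩, hcoe⟩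
  · ext u
    simp [ContinuousLinearMap.mul_apply]
  · ext u
    simp [ContinuousLinearMap.mul_apply]

lemma not_mem_spectrum_of_gt {H : l2Z →L[ℝ] l2Z} {K : ℝ}
    (hquad : ∀ u : l2Z, ⟪H u, u⟫_ℝ ≤ K * ‖u‖^2) {μ : ℝ} (hμ : K < μ) :
    μ ∉ spectrum ℝ H := by
  rw [spectrum.notMem_iff]
  set T := algebraMap ℝ (l2Z →L[ℝ] l2Z) μ - H with hT
  have hTapp : ∀ u : l2Z, T u = μ • u - H u := by
    intro u
    simp [hT, Algebra.algebraMap_eq_smul_one]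
  apply isUnit_of_coercive
  refine ⟨μ - K, by linarith, fun u => ?_⟩
  rw [bilinT_apply, hTapp, inner_sub_left, real_inner_smul_left, real_inner_self_eq_norm_sq]
  have h1 := hquad u
  have h2 : ‖u‖ * ‖u‖ = ‖u‖^2 := (sq ‖u‖).symm
  nlinarith [sq_nonneg ‖u‖]

lemma exists_unit_vector : ∃ u : l2Z, ‖u‖ = 1 := by
  refine ⟨lp.single 2 (0:ℤ) (1:ℝ), ?_⟩
  have h := lp.norm_single (E := fun _ : ℤ => ℝ) (p := 2) (by norm_num) 0 (1:ℝ)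
  simpa using h

lemma rayleigh_mem_spectrum (H : l2Z →L[ℝ] l2Z)
    (hsym : ∀ u w : l2Z, ⟪H u, w⟫_ℝ = ⟪u, H w⟫_ℝ) :
    sSup {r : ℝ | ∃ u : l2Z, ‖u‖ = 1 ∧ r = ⟪H u, u⟫_ℝ} ∈ spectrum ℝ H := by
  set RS := {r : ℝ | ∃ u : l2Z, ‖u‖ = 1 ∧ r = ⟪H u, u⟫_ℝ} with hRS
  obtain ⟨u₀, hu₀⟩ := exists_unit_vector
  have hne : RS.Nonempty := ⟨⟪H u₀, u₀⟫_ℝ, u₀, hu₀, rfl⟩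
  have hbdd : BddAbove RS := by
    refine ⟨‖H‖, ?_⟩
    rintro r ⟨u, hu, rfl⟩
    calc ⟪H u, u⟫_ℝ ≤ ‖H u‖ * ‖u‖ := real_inner_le_norm _ _
      _ ≤ ‖H‖ * ‖u‖ * ‖u‖ := by
          have := H.le_opNorm u
          nlinarith [norm_nonneg u, norm_nonneg (H u)]
      _ = ‖H‖ := by rw [hu]; ring
  set m := sSup RS with hm
  have hle : ∀ u : l2Z, ⟪H u, u⟫_ℝ ≤ m * ‖u‖^2 := by
    intro u
    rcases eq_or_ne u 0 with rfl | hu0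
    · simp
    · have hnu : (0:ℝ) < ‖u‖ := norm_pos_iff.2 hu0
      set c := ‖u‖⁻¹ with hc
      have hcu : ‖c • u‖ = 1 := by
        rw [norm_smul]
        simp [hc, abs_of_pos (inv_pos.2 hnu), inv_mul_cancel₀ (ne_of_gt hnu)]
      have hmem : ⟪H (c • u), c • u⟫_ℝ ∈ RS := ⟨c • u, hcu, rfl⟩
      have hsup := le_csSup hbdd hmem
      have hval : ⟪H (c • u), c • u⟫_ℝ = c^2 * ⟪H u, u⟫_ℝ := by
        rw [_root_.map_smul, real_inner_smul_left, real_inner_smul_right]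
        ring
      rw [hval] at hsup
      have hc2 : c^2 = (‖u‖^2)⁻¹ := by rw [hc]; rw [sq, sq, mul_inv]
      have hn2 : (0:ℝ) < ‖u‖^2 := by positivity
      calc ⟪H u, u⟫_ℝ = (c^2 * ⟪H u, u⟫_ℝ) * ‖u‖^2 := by
            rw [hc2]; field_simp
        _ ≤ m * ‖u‖^2 := mul_le_mul_of_nonneg_right hsup (le_of_lt hn2)
  by_contra hnot
  rw [spectrum.notMem_iff] at hnot
  set T := algebraMap ℝ (l2Z →L[ℝ] l2Z) m - H with hT
  have hTapp : ∀ u : l2Z, T u = m • u - H u := by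
    intro u
    simp [hT, Algebra.algebraMap_eq_smul_one]
  have hTpos : ∀ u : l2Z, 0 ≤ ⟪T u, u⟫_ℝ := by
    intro u
    rw [hTapp, inner_sub_left, real_inner_smul_left, real_inner_self_eq_norm_sq]
    have := hle u
    nlinarith
  have hTsym : ∀ u w : l2Z, ⟪T u, w⟫_ℝ = ⟪u, T w⟫_ℝ := by
    intro u w
    rw [hTapp, hTapp, inner_sub_left, inner_sub_right, real_inner_smul_left,
      real_inner_smul_right, hsym]
  have hCS : ∀ u w : l2Z, ⟪T u, w⟫_ℝ^2 ≤ ⟪T u, u⟫_ℝ * ⟪T w, w⟫_ℝ := by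
    intro u w
    have hpoly : ∀ t : ℝ, 0 ≤ ⟪T w, w⟫_ℝ * (t * t) + (2 * ⟪T u, w⟫_ℝ) * t + ⟪T u, u⟫_ℝ := by
      intro t
      have h := hTpos (u + t • w)
      have hexp : ⟪T (u + t • w), u + t • w⟫_ℝ
          = ⟪T w, w⟫_ℝ * (t * t) + (2 * ⟪T u, w⟫_ℝ) * t + ⟪T u, u⟫_ℝ := by
        have hswap : ⟪T w, u⟫_ℝ = ⟪T u, w⟫_ℝ := by
          rw [hTsym w u, real_inner_comm]
        simp only [_root_.map_add, _root_.map_smul, inner_add_left, inner_add_right,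
          real_inner_smul_left, real_inner_smul_right, hswap]
        ring
      rw [hexp] at h
      exact h
    have hdisc := discrim_le_zero hpoly
    rw [discrim] at hdisc
    nlinarith
  obtain ⟨Tu, hTu⟩ := hnot
  set B := (Tu⁻¹ : (l2Z →L[ℝ] l2Z)ˣ) with hB
  have hBT : ∀ u : l2Z, (B : l2Z →L[ℝ] l2Z) (T u) = u := by
    intro u
    have h1 : (B : l2Z →L[ℝ] l2Z) * T = 1 := by
      rw [hB, ← hTu]
      exact Tu.inv_mul
    calc (B : l2Z →L[ℝ] l2Z) (T u) = ((B : l2Z →L[ℝ] l2Z) * T) u := rfl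
      _ = u := by rw [h1]; rfl
  obtain ⟨u₁, hu₁⟩ := exists_unit_vector
  have hBpos : (0:ℝ) < ‖(B : l2Z →L[ℝ] l2Z)‖ := by
    by_contra hle'
    push_neg at hle'
    have hB0 : (B : l2Z →L[ℝ] l2Z) = 0 := by
      rw [← norm_le_zero_iff]
      exact hle'
    have h := hBT u₁
    rw [hB0, ContinuousLinearMap.zero_apply] at h
    rw [← h] at hu₁
    rw [norm_zero] at hu₁
    norm_num at hu₁
  set c := ‖(B : l2Z →L[ℝ] l2Z)‖⁻¹ with hc
  have hcpos : 0 < c := inv_pos.2 hBpos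
  have hTlow : ∀ u : l2Z, c * ‖u‖ ≤ ‖T u‖ := by
    intro u
    have h1 : ‖u‖ ≤ ‖(B : l2Z →L[ℝ] l2Z)‖ * ‖T u‖ := by
      conv_lhs => rw [← hBT u]
      exact (B : l2Z →L[ℝ] l2Z).le_opNorm (T u)
    have h2 := mul_le_mul_of_nonneg_left h1 (le_of_lt hcpos)
    calc c * ‖u‖ ≤ c * (‖(B : l2Z →L[ℝ] l2Z)‖ * ‖T u‖) := h2
      _ = ‖T u‖ := by
          rw [hc, inv_mul_cancel_left₀ (ne_of_gt hBpos)]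
  have hTnormpos : 0 < ‖T‖ := by
    have h2 : c ≤ ‖T u₁‖ := by
      have := hTlow u₁
      rwa [hu₁, mul_one] at this
    have h3 : ‖T u₁‖ ≤ ‖T‖ := by
      have := T.le_opNorm u₁
      rwa [hu₁, mul_one] at this
    linarith
  set δ := c^2 / (2 * ‖T‖) with hδ
  have hδpos : 0 < δ := by positivity
  obtain ⟨r, hrmem, hr⟩ := exists_lt_of_lt_csSup hne (show m - δ < m by linarith)
  obtain ⟨u, hu, rfl⟩ := hrmem
  have hTuu : ⟪T u, u⟫_ℝ < δ := by
    rw [hTapp, inner_sub_left, real_inner_smul_left, real_inner_self_eq_norm_sq, hu]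
    have : m * 1^2 = m := by ring
    rw [this]
    linarith
  have hX : c ≤ ‖T u‖ := by
    have := hTlow u
    rwa [hu, mul_one] at this
  have hXpos : 0 < ‖T u‖ := lt_of_lt_of_le hcpos hX
  have hCSu := hCS u (T u)
  have hinself : ⟪T u, T u⟫_ℝ = ‖T u‖^2 := real_inner_self_eq_norm_sq _
  have hTTu : ⟪T (T u), T u⟫_ℝ ≤ ‖T‖ * ‖T u‖^2 := by
    calc ⟪T (T u), T u⟫_ℝ ≤ ‖T (T u)‖ * ‖T u‖ := real_inner_le_norm _ _
      _ ≤ (‖T‖ * ‖T u‖) * ‖T u‖ :=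
          mul_le_mul_of_nonneg_right (T.le_opNorm (T u)) (norm_nonneg _)
      _ = ‖T‖ * ‖T u‖^2 := by ring
  have h4 : ‖T u‖^4 ≤ δ * (‖T‖ * ‖T u‖^2) := by
    have e : ⟪T u, T u⟫_ℝ^2 = ‖T u‖^4 := by rw [hinself]; ring
    have b1 : ⟪T u, u⟫_ℝ * ⟪T (T u), T u⟫_ℝ ≤ δ * (‖T‖ * ‖T u‖^2) := by
      apply mul_le_mul (le_of_lt hTuu) hTTu (hTpos (T u))
      exact le_of_lt hδpos
    calc ‖T u‖^4 = ⟪T u, T u⟫_ℝ^2 := e.symm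
      _ ≤ ⟪T u, u⟫_ℝ * ⟪T (T u), T u⟫_ℝ := hCSu
      _ ≤ δ * (‖T‖ * ‖T u‖^2) := b1
  have h5 : δ * (‖T‖ * ‖T u‖^2) = c^2 * ‖T u‖^2 / 2 := by
    rw [hδ]
    rw [div_mul_eq_mul_div]
    rw [show c^2 * (‖T‖ * ‖T u‖^2) = (c^2 * ‖T u‖^2 / 2) * (2 * ‖T‖) by ring]
    rw [mul_div_assoc, div_self (by positivity : (2:ℝ) * ‖T‖ ≠ 0), mul_one]
  have h6 : c^2 * ‖T u‖^2 ≤ ‖T u‖^4 := by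
    have hX2 : c^2 ≤ ‖T u‖^2 := by nlinarith
    nlinarith [sq_nonneg (‖T u‖^2)]
  nlinarith [mul_pos (mul_pos hcpos hcpos) (mul_pos hXpos hXpos)]

theorem stmt3 (V : ℤ → ℝ) (hV : ∃ C, ∀ n, |V n| ≤ C)
    (H : l2Z →L[ℝ] l2Z)
    (hH : ∀ u : l2Z, ∀ n : ℤ, H u n = V n * u n + u (n + 1) + u (n - 1))
    (N : ℕ) (hN : 2 ≤ N) (ε : ℝ) (hε : 0 < ε) :
    ∃ (a : ℤ) (E' : ℝ) (v : Fin N → ℝ), v ≠ 0 ∧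
      (jacobi V a N).mulVec v = E' • v ∧
      E' > sSup (spectrum ℝ H) - 2 / N - ε := by
  obtain ⟨C, hC⟩ := hV
  have hN1 : 1 ≤ N := by omega
  set M := ⨆ a : ℤ, lammax V a N with hM
  have hsym : ∀ u w : l2Z, ⟪H u, w⟫_ℝ = ⟪u, H w⟫_ℝ := H_symm hC H hH
  have hquad : ∀ u : l2Z, ⟪H u, u⟫_ℝ ≤ (M + 2/(N:ℝ)) * ‖u‖^2 := quad_bound V C hC H hH N hN
  have hmem := rayleigh_mem_spectrum H hsym
  have hspec_le : ∀ μ ∈ spectrum ℝ H, μ ≤ M + 2/(N:ℝ) := by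
    intro μ hμ
    by_contra hgt
    push_neg at hgt
    exact (not_mem_spectrum_of_gt hquad hgt) hμ
  have hsup_le : sSup (spectrum ℝ H) ≤ M + 2/(N:ℝ) :=
    csSup_le ⟨_, hmem⟩ hspec_le
  have hlt : M - ε/2 < ⨆ a : ℤ, lammax V a N := by rw [← hM]; linarith
  obtain ⟨a, ha⟩ := exists_lt_of_lt_ciSup hlt
  obtain ⟨v, hv0, hvE⟩ := jacobi_exists_top V a N hN1
  refine ⟨a, lammax V a N, v, hv0, hvE, ?_⟩
  calc sSup (spectrum ℝ H) - 2 / (N:ℝ) - ε ≤ M - ε := by linarith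
    _ < lammax V a N := by linarith
end
end

section
/- Let ω ∈ ℝ and let H be the operator on ℓ²(ℤ) defined by (Hu)(n) = 2cos(2πn²ω)u(n) + u(n+1) + u(n-1). Let N ≥ 2 and let λ₊ = max_{(x,y)∈[0,1]²} λ₊(x,y), where λ₊(x,y) is the largest eigenvalue of the N×N matrix with diagonal 2cos(2π(n²ω + ny + x)), n = 0,...,N-1, and off-diagonal entries 1. Then Spec H ⊂ [-λ₊ - 2/N, λ₊ + 2/N]. -/
noncomputable section

def skewMat (ω x y : ℝ) (N : ℕ) : Matrix (Fin N) (Fin N) ℝ :=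
  fun i j =>
    if (i : ℕ) = (j : ℕ) then
      2 * Real.cos (2 * Real.pi * (((i : ℕ) : ℝ) ^ 2 * ω + ((i : ℕ) : ℝ) * y + x))
    else if (i : ℕ) + 1 = (j : ℕ) ∨ (j : ℕ) + 1 = (i : ℕ) then 1 else 0

/-- Largest eigenvalue of `skewMat ω x y N`. -/
def lamPlusXY (ω x y : ℝ) (N : ℕ) : ℝ :=
  sSup {E | ∃ v : Fin N → ℝ, v ≠ 0 ∧ (skewMat ω x y N).mulVec v = E • v}

/-- The maximum of the largest eigenvalue over `(x,y) ∈ [0,1]²`. -/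
def lamPlus (ω : ℝ) (N : ℕ) : ℝ :=
  sSup {l : ℝ | ∃ x ∈ Set.Icc (0 : ℝ) 1, ∃ y ∈ Set.Icc (0 : ℝ) 1, l = lamPlusXY ω x y N}

namespace Aux

lemma skew_herm (ω x y : ℝ) (N : ℕ) : (skewMat ω x y N).IsHermitian := by
  unfold Matrix.IsHermitian
  ext i j
  rw [Matrix.conjTranspose_apply, star_trivial]
  by_cases h : (j : ℕ) = (i : ℕ)
  · have : j = i := Fin.ext h
    subst this; rfl
  · have h' : ¬ (i : ℕ) = (j : ℕ) := fun hh => h hh.symm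
    simp only [skewMat, if_neg h, if_neg h', or_comm]

lemma skew_abs_le (ω x y : ℝ) (N : ℕ) (i j : Fin N) : |skewMat ω x y N i j| ≤ 2 := by
  unfold skewMat
  split_ifs with h1 h2
  · rw [abs_mul, abs_two]
    have := Real.abs_cos_le_one (2 * Real.pi * (((i : ℕ) : ℝ) ^ 2 * ω + ((i : ℕ) : ℝ) * y + x))
    linarith
  · norm_num
  · norm_num

lemma eig_le (ω x y : ℝ) (N : ℕ) (E : ℝ)
    (hE : E ∈ {E | ∃ v : Fin N → ℝ, v ≠ 0 ∧ (skewMat ω x y N).mulVec v = E • v}) :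
    E ≤ 2 * N := by
  obtain ⟨v, hv0, hveq⟩ := hE
  have hNpos : 0 < N := by
    rcases Nat.eq_zero_or_pos N with h | h
    · exfalso
      haveI : IsEmpty (Fin N) := by rw [h]; infer_instance
      exact hv0 (Subsingleton.elim v 0)
    · exact h
  obtain ⟨i, -, hi⟩ := Finset.exists_max_image Finset.univ (fun i => |v i|)
    ⟨⟨0, hNpos⟩, Finset.mem_univ _⟩
  have hipos : 0 < |v i| := by
    rcases lt_or_ge 0 |v i| with h | h
    · exact h
    · exfalso; apply hv0; funext j
      have h1 := hi j (Finset.mem_univ _)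
      exact abs_eq_zero.mp (le_antisymm (le_trans h1 h) (abs_nonneg _))
  have hABS : |E| * |v i| ≤ 2 * N * |v i| := by
    have h0 : E * v i = (skewMat ω x y N).mulVec v i := by rw [hveq]; simp
    calc |E| * |v i| = |(skewMat ω x y N).mulVec v i| := by rw [← abs_mul, h0]
      _ ≤ ∑ j, |skewMat ω x y N i j * v j| := by
          rw [Matrix.mulVec, dotProduct]
          exact Finset.abs_sum_le_sum_abs _ _
      _ ≤ ∑ _j : Fin N, 2 * |v i| := by
          apply Finset.sum_le_sum
          intro j _
          rw [abs_mul]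
          exact mul_le_mul (skew_abs_le ω x y N i j) (hi j (Finset.mem_univ _))
            (abs_nonneg _) (by norm_num)
      _ = 2 * N * |v i| := by
          rw [Finset.sum_const, Finset.card_univ, Fintype.card_fin]
          push_cast; ring
  have h2 : |E| ≤ (2 * N : ℝ) := by nlinarith [hABS, hipos]
  calc E ≤ |E| := le_abs_self E
    _ ≤ (2 * N : ℝ) := h2

lemma bddAbove_eig (ω x y : ℝ) (N : ℕ) :
    BddAbove {E : ℝ | ∃ v : Fin N → ℝ, v ≠ 0 ∧ (skewMat ω x y N).mulVec v = E • v} :=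
  ⟨(2 * N : ℝ), fun E hE => eig_le ω x y N E hE⟩

lemma lamPlusXY_le (ω x y : ℝ) (N : ℕ) : lamPlusXY ω x y N ≤ 2 * N :=
  Real.sSup_le (fun E hE => eig_le ω x y N E hE) (by positivity)

lemma dotProduct_self_nonneg (N : ℕ) (v : Fin N → ℝ) : 0 ≤ dotProduct v v :=
  Finset.sum_nonneg fun i _ => mul_self_nonneg (v i)

lemma quad_le_XY (ω x y : ℝ) (N : ℕ) (v : Fin N → ℝ) :
    dotProduct v ((skewMat ω x y N).mulVec v) ≤
      lamPlusXY ω x y N * dotProduct v v := by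
  classical
  set A := skewMat ω x y N with hA_def
  have hA : A.IsHermitian := skew_herm ω x y N
  set U : Matrix (Fin N) (Fin N) ℝ := (hA.eigenvectorUnitary : Matrix (Fin N) (Fin N) ℝ) with hU
  set w : Fin N → ℝ := Matrix.mulVec (star U) v with hw
  have hstar2 : U * star U = 1 := Matrix.mem_unitaryGroup_iff.mp hA.eigenvectorUnitary.2
  have hstarT : star U = U.transpose := by
    ext i j; simp [Matrix.star_apply]
  have hvecMul : Matrix.vecMul v U = w := by
    rw [hw, hstarT, Matrix.mulVec_transpose]
  have hdiag : Matrix.diagonal (RCLike.ofReal ∘ hA.eigenvalues) = Matrix.diagonal hA.eigenvalues := by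
    congr 1
  have hquad : dotProduct v (A.mulVec v) = ∑ i, hA.eigenvalues i * (w i * w i) := by
    conv_lhs => rw [hA.spectral_theorem, hdiag, Unitary.conjStarAlgAut_apply]
    rw [← Matrix.mulVec_mulVec, ← Matrix.mulVec_mulVec, ← hw,
      Matrix.dotProduct_mulVec v U, hvecMul]
    rw [dotProduct]
    apply Finset.sum_congr rfl
    intro i _
    rw [Matrix.mulVec_diagonal]
    ring
  have hnorm : dotProduct v v = ∑ i, w i * w i := by
    have h1 : v = U.mulVec w := by
      rw [hw, Matrix.mulVec_mulVec, hstar2, Matrix.one_mulVec]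
    have hstar1 : star U * U = 1 := Matrix.mem_unitaryGroup_iff'.mp hA.eigenvectorUnitary.2
    conv_lhs => rw [h1]
    rw [Matrix.dotProduct_mulVec]
    have h2 : Matrix.vecMul (U.mulVec w) U = w := by
      rw [← Matrix.mulVec_transpose, Matrix.mulVec_mulVec, ← hstarT, hstar1, Matrix.one_mulVec]
    rw [h2, dotProduct]
  have heig : ∀ j, hA.eigenvalues j ≤ lamPlusXY ω x y N := by
    intro j
    apply le_csSup (bddAbove_eig ω x y N)
    refine ⟨(WithLp.equiv 2 _) (hA.eigenvectorBasis j), ?_, ?_⟩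
    · intro hzero
      have hnz : hA.eigenvectorBasis j ≠ 0 := by
        intro hz
        have := hA.eigenvectorBasis.orthonormal.1 j
        rw [hz] at this; simp at this
      apply hnz
      have := congrArg (WithLp.equiv 2 ((i : Fin N) → ℝ)).symm hzero
      simpa using this
    · exact hA.mulVec_eigenvectorBasis j
  rw [hquad, hnorm, Finset.mul_sum]
  apply Finset.sum_le_sum
  intro i _
  exact mul_le_mul_of_nonneg_right (heig i) (mul_self_nonneg _)

lemma bddAbove_lam (ω : ℝ) (N : ℕ) :
    BddAbove {l : ℝ | ∃ x ∈ Set.Icc (0 : ℝ) 1, ∃ y ∈ Set.Icc (0 : ℝ) 1, l = lamPlusXY ω x y N} := by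
  refine ⟨(2 * N : ℝ), ?_⟩
  rintro l ⟨x, -, y, -, rfl⟩
  exact lamPlusXY_le ω x y N

lemma lamPlusXY_le_lamPlus (ω : ℝ) (N : ℕ) {x y : ℝ} (hx : x ∈ Set.Icc (0:ℝ) 1)
    (hy : y ∈ Set.Icc (0:ℝ) 1) : lamPlusXY ω x y N ≤ lamPlus ω N :=
  le_csSup (bddAbove_lam ω N) ⟨x, hx, y, hy, rfl⟩

lemma quad_le_lam (ω : ℝ) (N : ℕ) {x y : ℝ} (hx : x ∈ Set.Icc (0:ℝ) 1)
    (hy : y ∈ Set.Icc (0:ℝ) 1) (v : Fin N → ℝ) :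
    dotProduct v ((skewMat ω x y N).mulVec v) ≤
      lamPlus ω N * dotProduct v v :=
  le_trans (quad_le_XY ω x y N v)
    (mul_le_mul_of_nonneg_right (lamPlusXY_le_lamPlus ω N hx hy) (dotProduct_self_nonneg N v))

end Aux

namespace Aux2
open Aux

def dd (ω : ℝ) (n : ℤ) : ℝ := 2 * Real.cos (2 * Real.pi * (n : ℝ) ^ 2 * ω)

lemma skew_split (ω x y : ℝ) (N : ℕ) (i j : Fin N) :
    skewMat ω x y N i j =
      (if (i : ℕ) = (j : ℕ) then
        2 * Real.cos (2 * Real.pi * (((i : ℕ) : ℝ) ^ 2 * ω + ((i : ℕ) : ℝ) * y + x)) else 0)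
      + ((if (i : ℕ) + 1 = (j : ℕ) then (1:ℝ) else 0)
      + (if (j : ℕ) + 1 = (i : ℕ) then (1:ℝ) else 0)) := by
  unfold skewMat
  by_cases h1 : (i : ℕ) = (j : ℕ)
  · rw [if_pos h1, if_pos h1, if_neg (by omega), if_neg (by omega)]; ring
  · rw [if_neg h1, if_neg h1]
    by_cases h2 : (i : ℕ) + 1 = (j : ℕ)
    · rw [if_pos (Or.inl h2), if_pos h2, if_neg (by omega)]; ring
    · by_cases h3 : (j : ℕ) + 1 = (i : ℕ)
      · rw [if_pos (Or.inr h3), if_neg h2, if_pos h3]; ring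
      · rw [if_neg (by tauto), if_neg h2, if_neg h3]; ring

lemma skew_diag (ω : ℝ) (m : ℤ) (N : ℕ) (i : Fin N) :
    2 * Real.cos (2 * Real.pi * (((i : ℕ) : ℝ) ^ 2 * ω + ((i : ℕ) : ℝ) * Int.fract (2 * (m:ℝ) * ω)
      + Int.fract ((m:ℝ)^2 * ω))) = dd ω (m + (i : ℕ)) := by
  have harg : 2 * Real.pi * (((i : ℕ) : ℝ) ^ 2 * ω + ((i : ℕ) : ℝ) * Int.fract (2 * (m:ℝ) * ω)
      + Int.fract ((m:ℝ)^2 * ω))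
      = 2 * Real.pi * ((m : ℝ) + ((i : ℕ) : ℝ)) ^ 2 * ω
        - ((i : ℕ) * ⌊2 * (m:ℝ) * ω⌋ + ⌊(m:ℝ)^2 * ω⌋ : ℤ) * (2 * Real.pi) := by
    unfold Int.fract
    push_cast
    ring
  rw [harg, Real.cos_sub_int_mul_two_pi, dd]
  push_cast
  ring_nf

end Aux2

namespace Aux2
open Aux

lemma range_ite1 (N : ℕ) (hN : 0 < N) (G : ℕ → ℝ) :
    ∑ n ∈ Finset.range N, (if n + 1 < N then G n else 0) = ∑ n ∈ Finset.range (N-1), G n := by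
  obtain ⟨M, rfl⟩ := Nat.exists_eq_add_of_lt hN
  simp only [zero_add, Nat.add_sub_cancel]
  rw [Finset.sum_range_succ]
  simp only [add_lt_add_iff_right]
  rw [if_neg (lt_irrefl M), add_zero]
  exact Finset.sum_congr rfl fun n hn => if_pos (by simpa using Finset.mem_range.mp hn)

lemma range_ite2 (N : ℕ) (G : ℕ → ℝ) :
    ∑ n ∈ Finset.range N, (if 0 < n then G (n-1) else 0) = ∑ n ∈ Finset.range (N-1), G n := by
  cases N with
  | zero => simp
  | succ M =>
    rw [Finset.sum_range_succ']
    simp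

lemma block_quad (ω : ℝ) (N : ℕ) (hN : 0 < N) (u : ℤ → ℝ) (m : ℤ) :
    dotProduct (fun r : Fin N => u (m + (r:ℕ)))
      ((skewMat ω (Int.fract ((m:ℝ)^2 * ω)) (Int.fract (2 * (m:ℝ) * ω)) N).mulVec
        (fun r : Fin N => u (m + (r:ℕ))))
    = (∑ r : Fin N, dd ω (m + (r:ℕ)) * (u (m + (r:ℕ)) * u (m + (r:ℕ))))
      + 2 * ((∑ r : Fin N, u (m + (r:ℕ)) * u (m + (r:ℕ) + 1))
              - u (m + N - 1) * u (m + N)) := by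
  classical
  set x := Int.fract ((m:ℝ)^2 * ω) with hx
  set y := Int.fract (2 * (m:ℝ) * ω) with hy
  set v : Fin N → ℝ := fun r => u (m + (r:ℕ)) with hv
  set A := skewMat ω x y N with hA
  have expand : dotProduct v (A.mulVec v) = ∑ i, ∑ j : Fin N, v i * (A i j * v j) := by
    rw [dotProduct]
    apply Finset.sum_congr rfl
    intro i _
    rw [Matrix.mulVec, dotProduct, Finset.mul_sum]
  have rowsplit : ∀ i : Fin N, ∑ j : Fin N, v i * (A i j * v j)
      = (∑ j : Fin N, v i * ((if (i : ℕ) = (j : ℕ) then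
          2 * Real.cos (2 * Real.pi * (((i : ℕ) : ℝ) ^ 2 * ω + ((i : ℕ) : ℝ) * y + x)) else 0) * v j))
        + ((∑ j : Fin N, v i * ((if (i : ℕ) + 1 = (j : ℕ) then (1:ℝ) else 0) * v j))
        + (∑ j : Fin N, v i * ((if (j : ℕ) + 1 = (i : ℕ) then (1:ℝ) else 0) * v j))) := by
    intro i
    rw [← Finset.sum_add_distrib, ← Finset.sum_add_distrib]
    apply Finset.sum_congr rfl
    intro j _
    rw [hA, skew_split]
    ring
  have row1 : ∀ i : Fin N, (∑ j : Fin N, v i * ((if (i : ℕ) = (j : ℕ) then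
      2 * Real.cos (2 * Real.pi * (((i : ℕ) : ℝ) ^ 2 * ω + ((i : ℕ) : ℝ) * y + x)) else 0) * v j))
      = dd ω (m + (i:ℕ)) * (v i * v i) := by
    intro i
    have : ∀ j : Fin N, v i * ((if (i : ℕ) = (j : ℕ) then
        2 * Real.cos (2 * Real.pi * (((i : ℕ) : ℝ) ^ 2 * ω + ((i : ℕ) : ℝ) * y + x)) else 0) * v j)
        = if i = j then 2 * Real.cos (2 * Real.pi * (((i : ℕ) : ℝ) ^ 2 * ω + ((i : ℕ) : ℝ) * y + x)) * (v i * v j) else 0 := by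
      intro j
      by_cases h : i = j
      · rw [if_pos h, if_pos (congrArg Fin.val h)]; ring
      · rw [if_neg h, if_neg (fun hh => h (Fin.ext hh))]; ring
    rw [Finset.sum_congr rfl (fun j _ => this j), Finset.sum_ite_eq Finset.univ i _,
      if_pos (Finset.mem_univ i)]
    rw [hx, hy, skew_diag ω m N i]
  have row2 : ∀ i : Fin N, (∑ j : Fin N, v i * ((if (i : ℕ) + 1 = (j : ℕ) then (1:ℝ) else 0) * v j))
      = (if (i:ℕ) + 1 < N then u (m + (i:ℕ)) * u (m + (i:ℕ) + 1) else 0) := by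
    intro i
    by_cases h : (i:ℕ) + 1 < N
    · rw [if_pos h]
      have key : ∀ j : Fin N, v i * ((if (i : ℕ) + 1 = (j : ℕ) then (1:ℝ) else 0) * v j)
          = if j = ⟨(i:ℕ)+1, h⟩ then v i * v j else 0 := by
        intro j
        by_cases hj : j = ⟨(i:ℕ)+1, h⟩
        · rw [if_pos hj, if_pos (by rw [hj])]; ring
        · rw [if_neg hj, if_neg (fun hh => hj (Fin.ext hh.symm))]; ring
      rw [Finset.sum_congr rfl (fun j _ => key j), Finset.sum_ite_eq' Finset.univ _ _,
        if_pos (Finset.mem_univ _)]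
      show u (m + (i:ℕ)) * u (m + ((i:ℕ)+1 : ℕ)) = _
      push_cast
      ring_nf
    · rw [if_neg h]
      apply Finset.sum_eq_zero
      intro j _
      rw [if_neg (by omega)]
      ring
  have row3 : ∀ i : Fin N, (∑ j : Fin N, v i * ((if (j : ℕ) + 1 = (i : ℕ) then (1:ℝ) else 0) * v j))
      = (if 0 < (i:ℕ) then u (m + (i:ℕ)) * u (m + (i:ℕ) - 1) else 0) := by
    intro i
    by_cases h : 0 < (i:ℕ)
    · rw [if_pos h]
      have hlt : (i:ℕ) - 1 < N := by omega
      have key : ∀ j : Fin N, v i * ((if (j : ℕ) + 1 = (i : ℕ) then (1:ℝ) else 0) * v j)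
          = if j = ⟨(i:ℕ)-1, hlt⟩ then v i * v j else 0 := by
        intro j
        by_cases hj : j = ⟨(i:ℕ)-1, hlt⟩
        · rw [if_pos hj, if_pos (by rw [hj]; simp; omega)]; ring
        · rw [if_neg hj, if_neg (fun hh => hj (Fin.ext (by simp only [Fin.val_mk]; omega)))]; ring
      rw [Finset.sum_congr rfl (fun j _ => key j), Finset.sum_ite_eq' Finset.univ _ _,
        if_pos (Finset.mem_univ _)]
      show u (m + (i:ℕ)) * u (m + ((i:ℕ)-1 : ℕ)) = _
      rw [Nat.cast_sub (by omega : 1 ≤ (i:ℕ))]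
      push_cast
      ring_nf
    · rw [if_neg h]
      apply Finset.sum_eq_zero
      intro j _
      rw [if_neg (by omega)]
      ring
  have final : ∑ i : Fin N, ∑ j : Fin N, v i * (A i j * v j)
      = (∑ i : Fin N, dd ω (m + (i:ℕ)) * (v i * v i))
        + ((∑ i : Fin N, if (i:ℕ)+1 < N then u (m + (i:ℕ)) * u (m + (i:ℕ) + 1) else 0)
        + (∑ i : Fin N, if 0 < (i:ℕ) then u (m + (i:ℕ)) * u (m + (i:ℕ) - 1) else 0)) := by
    rw [← Finset.sum_add_distrib, ← Finset.sum_add_distrib]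
    exact Finset.sum_congr rfl fun i _ => by rw [rowsplit i, row1 i, row2 i, row3 i]
  have hS1 : (∑ i : Fin N, if (i:ℕ)+1 < N then u (m + (i:ℕ)) * u (m + (i:ℕ) + 1) else 0)
      = ∑ n ∈ Finset.range (N-1), u (m + (n:ℕ)) * u (m + (n:ℕ) + 1) := by
    rw [Fin.sum_univ_eq_sum_range (fun n => if n+1 < N then u (m + (n:ℕ)) * u (m + (n:ℕ) + 1) else 0) N]
    exact range_ite1 N hN _
  have hS2 : (∑ i : Fin N, if 0 < (i:ℕ) then u (m + (i:ℕ)) * u (m + (i:ℕ) - 1) else 0)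
      = ∑ n ∈ Finset.range (N-1), u (m + (n:ℕ) + 1) * u (m + (n:ℕ)) := by
    rw [Fin.sum_univ_eq_sum_range (fun n => if 0 < n then u (m + (n:ℕ)) * u (m + (n:ℕ) - 1) else 0) N]
    have heq : ∀ n ∈ Finset.range N, (if 0 < n then u (m + (n:ℕ)) * u (m + (n:ℕ) - 1) else 0)
        = (if 0 < n then u (m + ((n-1:ℕ):ℤ) + 1) * u (m + ((n-1:ℕ):ℤ)) else 0) := by
      intro n _
      by_cases h : 0 < n
      · rw [if_pos h, if_pos h, Nat.cast_sub (by omega : 1 ≤ n)]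
        push_cast
        ring_nf
      · rw [if_neg h, if_neg h]
    rw [Finset.sum_congr rfl heq]
    exact range_ite2 N (fun k => u (m + (k:ℕ) + 1) * u (m + (k:ℕ)))
  have hS3 : (∑ r : Fin N, u (m + (r:ℕ)) * u (m + (r:ℕ) + 1))
      = (∑ n ∈ Finset.range (N-1), u (m + (n:ℕ)) * u (m + (n:ℕ) + 1)) + u (m + N - 1) * u (m + N) := by
    rw [Fin.sum_univ_eq_sum_range (fun n => u (m + (n:ℕ)) * u (m + (n:ℕ) + 1)) N]
    rw [show N = (N - 1) + 1 from (Nat.succ_pred_eq_of_pos hN).symm] 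
    rw [Finset.sum_range_succ]
    have h1 : ((N - 1 : ℕ) : ℤ) = (N : ℤ) - 1 := by
      rw [Nat.cast_sub (by omega : 1 ≤ N)]; norm_num
    have h2 : N - 1 + 1 = N := Nat.succ_pred_eq_of_pos hN
    rw [h2, h1]
    rw [show m + ((N:ℤ) - 1) = m + (N:ℤ) - 1 from by ring,
      show m + (N:ℤ) - 1 + 1 = m + (N:ℤ) from by ring]
  have hcomm : (∑ n ∈ Finset.range (N-1), u (m + (n:ℕ) + 1) * u (m + (n:ℕ)))
      = ∑ n ∈ Finset.range (N-1), u (m + (n:ℕ)) * u (m + (n:ℕ) + 1) :=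
    Finset.sum_congr rfl fun n _ => mul_comm _ _
  rw [expand, final, hS1, hS2, hS3, hcomm]
  have : ∀ i : Fin N, dd ω (m + (i:ℕ)) * (v i * v i) = dd ω (m + (i:ℕ)) * (u (m + (i:ℕ)) * u (m + (i:ℕ))) :=
    fun i => rfl
  rw [Finset.sum_congr rfl fun i _ => this i]
  ring

end Aux2

namespace Aux3
open Aux Aux2

lemma flip_entry (ω : ℝ) (N : ℕ) {x : ℝ} (hx : x ∈ Set.Icc (0:ℝ) 1) (y : ℝ) (v : Fin N → ℝ)
    (i j : Fin N) :
    (fun r : Fin N => (-1:ℝ)^(r:ℕ) * v r) i *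
      (skewMat ω (if x ≤ 1/2 then x + 1/2 else x - 1/2) y N i j *
        (fun r : Fin N => (-1:ℝ)^(r:ℕ) * v r) j)
    = -(v i * (skewMat ω x y N i j * v j)) := by
  set x' := if x ≤ 1/2 then x + 1/2 else x - 1/2 with hx'
  simp only []
  unfold skewMat
  by_cases h1 : (i : ℕ) = (j : ℕ)
  · have hij : i = j := Fin.ext h1
    subst hij
    rw [if_pos h1, if_pos h1]
    have hcos : Real.cos (2 * Real.pi * (((i:ℕ):ℝ)^2 * ω + ((i:ℕ):ℝ) * y + x'))
        = -Real.cos (2 * Real.pi * (((i:ℕ):ℝ)^2 * ω + ((i:ℕ):ℝ) * y + x)) := by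
      rw [hx']
      by_cases h : x ≤ 1/2
      · rw [if_pos h, show 2 * Real.pi * (((i:ℕ):ℝ)^2 * ω + ((i:ℕ):ℝ) * y + (x + 1/2))
          = 2 * Real.pi * (((i:ℕ):ℝ)^2 * ω + ((i:ℕ):ℝ) * y + x) + Real.pi from by ring,
          Real.cos_add_pi]
      · rw [if_neg h, show 2 * Real.pi * (((i:ℕ):ℝ)^2 * ω + ((i:ℕ):ℝ) * y + (x - 1/2))
          = 2 * Real.pi * (((i:ℕ):ℝ)^2 * ω + ((i:ℕ):ℝ) * y + x) - Real.pi from by ring,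
          Real.cos_sub_pi]
    rw [hcos]
    have hsq : (-1:ℝ)^(i:ℕ) * (-1:ℝ)^(i:ℕ) = 1 := by
      rw [← pow_add]
      exact Even.neg_one_pow ⟨(i:ℕ), rfl⟩
    linear_combination (-(2 * Real.cos (2 * Real.pi * (((i:ℕ):ℝ)^2 * ω + ((i:ℕ):ℝ) * y + x)) * v i * v i)) * hsq
  · rw [if_neg h1, if_neg h1]
    by_cases h2 : (i : ℕ) + 1 = (j : ℕ) ∨ (j : ℕ) + 1 = (i : ℕ)
    · rw [if_pos h2]
      have hsign : (-1:ℝ)^(i:ℕ) * (-1:ℝ)^(j:ℕ) = -1 := by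
        rw [← pow_add]
        have : Odd ((i:ℕ) + (j:ℕ)) := by
          rcases h2 with h | h
          · exact ⟨(i:ℕ), by omega⟩
          · exact ⟨(j:ℕ), by omega⟩
        exact Odd.neg_one_pow this
      linear_combination (v i * v j) * hsign
    · rw [if_neg h2]
      ring

lemma quad_ge (ω : ℝ) (N : ℕ) {x y : ℝ} (hx : x ∈ Set.Icc (0:ℝ) 1) (hy : y ∈ Set.Icc (0:ℝ) 1)
    (v : Fin N → ℝ) :
    -(lamPlus ω N * dotProduct v v) ≤
      dotProduct v ((skewMat ω x y N).mulVec v) := by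
  set x' := if x ≤ 1/2 then x + 1/2 else x - 1/2 with hx'
  have hx'mem : x' ∈ Set.Icc (0:ℝ) 1 := by
    rw [hx']
    obtain ⟨h0, h1⟩ := hx
    by_cases h : x ≤ 1/2
    · rw [if_pos h]; constructor <;> linarith
    · rw [if_neg h]; constructor <;> linarith
  set w : Fin N → ℝ := fun r => (-1:ℝ)^(r:ℕ) * v r with hw
  have hkey : dotProduct w ((skewMat ω x' y N).mulVec w)
      = -(dotProduct v ((skewMat ω x y N).mulVec v)) := by
    rw [dotProduct, dotProduct, ← Finset.sum_neg_distrib]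
    apply Finset.sum_congr rfl
    intro i _
    rw [Matrix.mulVec, dotProduct, Matrix.mulVec, dotProduct,
      Finset.mul_sum, Finset.mul_sum, ← Finset.sum_neg_distrib]
    exact Finset.sum_congr rfl fun j _ => flip_entry ω N hx y v i j
  have hww : dotProduct w w = dotProduct v v := by
    rw [dotProduct, dotProduct]
    apply Finset.sum_congr rfl
    intro i _
    rw [hw]
    simp only []
    rw [show (-1:ℝ)^(i:ℕ) * v i * ((-1:ℝ)^(i:ℕ) * v i) = ((-1:ℝ)^(i:ℕ) * (-1:ℝ)^(i:ℕ)) * (v i * v i) from by ring,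
      ← pow_add, Even.neg_one_pow ⟨(i:ℕ), rfl⟩, one_mul]
  have hle := quad_le_lam ω N hx'mem hy w
  rw [hkey, hww] at hle
  linarith

lemma two_le_lamPlus (ω : ℝ) (N : ℕ) (hN : 0 < N) : 2 ≤ lamPlus ω N := by
  set i0 : Fin N := ⟨0, hN⟩ with hi0
  set v : Fin N → ℝ := Pi.single i0 1 with hv
  have h1 : dotProduct v ((skewMat ω 0 0 N).mulVec v) = skewMat ω 0 0 N i0 i0 := by
    rw [hv, Matrix.mulVec_single]
    simp [dotProduct, Pi.single_apply]
  have h2 : skewMat ω 0 0 N i0 i0 = 2 := by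
    unfold skewMat
    rw [if_pos rfl]
    have : ((i0:ℕ):ℝ) = 0 := by rw [hi0]; simp
    rw [this]
    norm_num
  have h3 : dotProduct v v = 1 := by
    rw [hv]
    simp [dotProduct, Pi.single_apply]
  have h4 := quad_le_XY ω 0 0 N v
  rw [h1, h2, h3, mul_one] at h4
  exact le_trans h4 (lamPlusXY_le_lamPlus ω N (by norm_num) (by norm_num))

end Aux3

namespace Aux4
open Aux Aux2 Aux3

def blockEquiv (a : ℤ) (N : ℕ) (hN : 0 < N) : ℤ × Fin N ≃ ℤ where
  toFun p := a + p.1 * N + (p.2 : ℕ)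
  invFun n := (((n - a) / (N:ℤ)), ⟨((n - a) % (N:ℤ)).toNat, by
    have h1 : 0 ≤ (n - a) % (N:ℤ) := Int.emod_nonneg _ (by exact_mod_cast hN.ne')
    have h2 : (n - a) % (N:ℤ) < N := Int.emod_lt_of_pos _ (by exact_mod_cast hN)
    omega⟩)
  left_inv := by
    rintro ⟨k, r⟩
    have hr0 : (0:ℤ) ≤ (r:ℕ) := Int.natCast_nonneg _
    have hrN : ((r:ℕ):ℤ) < (N:ℤ) := by exact_mod_cast r.2
    have hsub : a + k * N + (r:ℕ) - a = (r:ℕ) + k * N := by ring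
    have hdiv : (a + k * N + (r:ℕ) - a) / (N:ℤ) = k := by
      rw [hsub, Int.add_mul_ediv_right _ _ (by exact_mod_cast hN.ne' : (N:ℤ) ≠ 0),
        Int.ediv_eq_zero_of_lt hr0 hrN, zero_add]
    have hmod : (a + k * N + (r:ℕ) - a) % (N:ℤ) = (r:ℕ) := by
      rw [hsub, Int.add_mul_emod_self_right, Int.emod_eq_of_lt hr0 hrN]
    ext
    · simpa using hdiv
    · simp only [hmod]
      simp
  right_inv := by
    intro n
    have := Int.mul_ediv_add_emod (n - a) (N:ℤ)
    have h1 : 0 ≤ (n - a) % (N:ℤ) := Int.emod_nonneg _ (by exact_mod_cast hN.ne')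
    simp only []
    rw [Int.toNat_of_nonneg h1]
    linarith

lemma hasSum_blocks (f : ℤ → ℝ) (hf : Summable f) (a : ℤ) {N : ℕ} (hN : 0 < N) :
    HasSum (fun k : ℤ => ∑ r : Fin N, f (a + k * N + (r:ℕ))) (∑' n, f n) := by
  have h1 : HasSum (f ∘ (blockEquiv a N hN)) (∑' n, f n) :=
    ((blockEquiv a N hN).hasSum_iff).2 hf.hasSum
  exact h1.prod_fiberwise (fun k => hasSum_fintype _)

end Aux4


namespace Aux5
open Aux Aux2 Aux3 Aux4

lemma summable_sq (u : l2Z) : Summable (fun n : ℤ => u n ^ 2) := by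
  have h := lp.memℓp u
  rw [memℓp_gen_iff (by norm_num : 0 < (2:ENNReal).toReal)] at h
  have h2 : ∀ n : ℤ, ‖u n‖ ^ (2:ENNReal).toReal = u n ^ 2 := by
    intro n
    rw [show (2:ENNReal).toReal = ((2:ℕ):ℝ) from by norm_num, Real.rpow_natCast]
    rw [Real.norm_eq_abs, sq_abs]
  rwa [funext h2] at h

lemma norm_sq_eq (u : l2Z) : ‖u‖ ^ 2 = ∑' n : ℤ, u n ^ 2 := by
  have h := lp.norm_rpow_eq_tsum (by norm_num : 0 < (2:ENNReal).toReal) u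
  have h2 : ∀ n : ℤ, ‖u n‖ ^ (2:ENNReal).toReal = u n ^ 2 := by
    intro n
    rw [show (2:ENNReal).toReal = ((2:ℕ):ℝ) from by norm_num, Real.rpow_natCast]
    rw [Real.norm_eq_abs, sq_abs]
  rw [funext h2] at h
  rw [← h, show (2:ENNReal).toReal = ((2:ℕ):ℝ) from by norm_num, Real.rpow_natCast]

lemma summable_shift_sq (u : l2Z) (c : ℤ) : Summable (fun n : ℤ => u (n + c) ^ 2) :=
  ((Equiv.addRight c).summable_iff (f := fun n : ℤ => u n ^ 2)).2 (summable_sq u)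

lemma summable_cross (u w : l2Z) (c : ℤ) : Summable (fun n : ℤ => u (n + c) * w n) := by
  rw [← summable_abs_iff]
  apply Summable.of_nonneg_of_le (fun n => abs_nonneg _)
    (fun n => ?_) (((summable_shift_sq u c).add (summable_sq w)))
  rw [abs_mul]
  nlinarith [abs_nonneg (u (n+c)), abs_nonneg (w n), sq_abs (u (n+c)), sq_abs (w n),
    sq_nonneg (|u (n+c)| - |w n|)]

lemma summable_dmul (ω : ℝ) (u w : l2Z) : Summable (fun n : ℤ => dd ω n * u n * w n) := by
  rw [← summable_abs_iff]
  apply Summable.of_nonneg_of_le (fun n => abs_nonneg _)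
    (fun n => ?_) (((summable_sq u).add (summable_sq w)))
  rw [abs_mul, abs_mul]
  have hd : |dd ω n| ≤ 2 := by
    rw [dd, abs_mul, abs_two]
    have := Real.abs_cos_le_one (2 * Real.pi * ((n:ℤ):ℝ)^2 * ω)
    push_cast at this ⊢
    linarith
  have h1 : |u n| * |w n| ≤ (u n ^2 + w n ^2) / 2 := by
    nlinarith [sq_abs (u n), sq_abs (w n), sq_nonneg (|u n| - |w n|)]
  nlinarith [abs_nonneg (u n), abs_nonneg (w n), abs_nonneg (dd ω n),
    mul_nonneg (abs_nonneg (u n)) (abs_nonneg (w n))]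

lemma inner_eq (u w : l2Z) : (inner ℝ u w : ℝ) = ∑' n : ℤ, u n * w n := by
  rw [lp.inner_eq_tsum]
  simp [RCLike.inner_apply]
  exact tsum_congr fun n => mul_comm _ _

end Aux5

namespace Aux6
open Aux Aux2 Aux3 Aux4 Aux5

variable (ω : ℝ) (H : l2Z →L[ℝ] l2Z)
variable (hH : ∀ u : l2Z, ∀ n : ℤ,
      H u n = 2 * Real.cos (2 * Real.pi * (n : ℝ) ^ 2 * ω) * u n + u (n + 1) + u (n - 1))

include hH

lemma apply_eq (u : l2Z) (n : ℤ) : H u n = dd ω n * u n + u (n + 1) + u (n - 1) := hH u n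

lemma inner_Hu (u w : l2Z) : (inner ℝ (H u) w : ℝ)
    = (∑' n : ℤ, dd ω n * u n * w n) + ((∑' n : ℤ, u (n+1) * w n) + (∑' n : ℤ, u (n-1) * w n)) := by
  rw [inner_eq]
  have h1 : ∀ n : ℤ, H u n * w n
      = dd ω n * u n * w n + (u (n+1) * w n + u (n-1) * w n) := by
    intro n
    rw [apply_eq ω H hH u n]
    ring
  rw [tsum_congr h1]
  have hs3 : Summable (fun n : ℤ => u (n-1) * w n) := by
    have := summable_cross u w (-1)
    simpa [sub_eq_add_neg] using this
  rw [Summable.tsum_add (summable_dmul ω u w) ((summable_cross u w 1).add hs3),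
    Summable.tsum_add (summable_cross u w 1) hs3]

lemma symmQ (u w : l2Z) : (inner ℝ (H u) w : ℝ) = (inner ℝ u (H w) : ℝ) := by
  rw [inner_Hu ω H hH u w]
  have hrw : (inner ℝ u (H w) : ℝ) = (inner ℝ (H w) u : ℝ) := real_inner_comm _ _
  rw [hrw, inner_Hu ω H hH w u]
  have c1 : (∑' n : ℤ, u (n+1) * w n) = ∑' n : ℤ, w (n-1) * u n := by
    rw [← (Equiv.addRight (1:ℤ)).tsum_eq (fun n : ℤ => w (n-1) * u n)]
    apply tsum_congr
    intro n
    simp only [Equiv.coe_addRight]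
    rw [show n + 1 - 1 = n from by ring]
    ring
  have c2 : (∑' n : ℤ, u (n-1) * w n) = ∑' n : ℤ, w (n+1) * u n := by
    rw [← (Equiv.addRight (-1:ℤ)).tsum_eq (fun n : ℤ => w (n+1) * u n)]
    apply tsum_congr
    intro n
    simp only [Equiv.coe_addRight]
    rw [show n + -1 + 1 = n from by ring, show n + -1 = n - 1 from by ring]
    ring
  have c0 : (∑' n : ℤ, dd ω n * u n * w n) = ∑' n : ℤ, dd ω n * w n * u n :=
    tsum_congr fun n => by ring
  rw [c0, c1, c2]
  ring



lemma inner_self (u : l2Z) : (inner ℝ (H u) u : ℝ)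
    = (∑' n : ℤ, dd ω n * u n * u n) + 2 * ∑' n : ℤ, u n * u (n+1) := by
  rw [inner_Hu ω H hH u u]
  have t1 : (∑' n : ℤ, u (n+1) * u n) = ∑' n : ℤ, u n * u (n+1) :=
    tsum_congr fun n => mul_comm _ _
  have t2 : (∑' n : ℤ, u (n-1) * u n) = ∑' n : ℤ, u n * u (n+1) := by
    rw [← (Equiv.addRight (1:ℤ)).tsum_eq (fun n : ℤ => u (n-1) * u n)]
    apply tsum_congr
    intro n
    simp only [Equiv.coe_addRight]
    rw [show n + 1 - 1 = n from by ring]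
  rw [t1, t2]
  ring

lemma quad_bound (N : ℕ) (hN : 2 ≤ N) (u : l2Z) :
    |(inner ℝ (H u) u : ℝ)| ≤ (lamPlus ω N + 2 / N) * ‖u‖ ^ 2 := by
  have hNpos : 0 < N := by omega
  have hNR : (0:ℝ) < N := by exact_mod_cast hNpos
  set U : ℤ → ℝ := fun n => u n with hU
  have hsq : Summable (fun n : ℤ => U n ^ 2) := summable_sq u
  set SS := ∑' n : ℤ, U n ^ 2 with hSS
  have hSSnn : 0 ≤ SS := tsum_nonneg fun n => sq_nonneg _
  have hnorm : ‖u‖ ^ 2 = SS := norm_sq_eq u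
  set g : ℤ → ℝ := fun n => U n * U (n+1) with hgdef
  have hg : Summable g := (summable_cross u u 1).congr fun n => mul_comm _ _
  have hfd : Summable (fun n : ℤ => dd ω n * U n * U n) := summable_dmul ω u u
  set D := ∑' n : ℤ, dd ω n * U n * U n with hD
  set T := ∑' n : ℤ, g n with hT
  have hinner : (inner ℝ (H u) u : ℝ) = D + 2 * T := inner_self ω H hH u
  -- the cut function
  set cut : ℕ → ℝ := fun a => ∑' k : ℤ, (U ((N:ℤ) - 1 + k * N + a) ^ 2 + U ((N:ℤ) + k * N + a) ^ 2)
    with hcutdef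
  have hinj : ∀ c : ℤ, Function.Injective (fun k : ℤ => c + k * (N:ℤ)) := by
    intro c k1 k2 h
    simp only [add_right_inj] at h
    exact mul_right_cancel₀ (by exact_mod_cast hNpos.ne') h
  have hsummableCA : ∀ (c : ℤ) (a : ℕ), Summable (fun k : ℤ => U (c + k * (N:ℤ) + a) ^ 2) := by
    intro c a
    have h1 := (summable_sq u).comp_injective (hinj (c + a))
    apply h1.congr
    intro k
    simp only [Function.comp_apply]
    rw [show c + (a:ℤ) + k * N = c + k * N + a from by ring]
  have hsummableCA' : ∀ (c : ℤ) (a : ℕ), Summable (fun k : ℤ => U (c + k * (N:ℤ) + a) ^ 2) :=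
    hsummableCA
  -- sum of cuts
  have hblocksq : ∀ c : ℤ, HasSum (fun k : ℤ => ∑ r : Fin N, U (c + k * N + (r:ℕ)) ^ 2) SS :=
    fun c => hasSum_blocks _ hsq c hNpos
  have hcutsum : ∑ a ∈ Finset.range N, cut a = 2 * SS := by
    have hsplit : ∀ a ∈ Finset.range N, cut a
        = (∑' k : ℤ, U ((N:ℤ) - 1 + k * N + a) ^ 2) + ∑' k : ℤ, U ((N:ℤ) + k * N + a) ^ 2 := by
      intro a _
      exact Summable.tsum_add (hsummableCA _ a) (hsummableCA _ a)
    rw [Finset.sum_congr rfl hsplit, Finset.sum_add_distrib]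
    have hA : ∑ a ∈ Finset.range N, ∑' k : ℤ, U ((N:ℤ) - 1 + k * N + a) ^ 2 = SS := by
      rw [← Summable.tsum_finsetSum (fun a _ => hsummableCA ((N:ℤ)-1) a)]
      rw [tsum_congr (fun k => (Fin.sum_univ_eq_sum_range
        (fun a => U ((N:ℤ) - 1 + k * N + a) ^ 2) N).symm)]
      exact (hblocksq ((N:ℤ)-1)).tsum_eq
    have hB : ∑ a ∈ Finset.range N, ∑' k : ℤ, U ((N:ℤ) + k * N + a) ^ 2 = SS := by
      rw [← Summable.tsum_finsetSum (fun a _ => hsummableCA (N:ℤ) a)]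
      rw [tsum_congr (fun k => (Fin.sum_univ_eq_sum_range
        (fun a => U ((N:ℤ) + k * N + a) ^ 2) N).symm)]
      exact (hblocksq (N:ℤ)).tsum_eq
    rw [hA, hB]
    ring
  -- choose a good offset
  have hmin : ∃ a ∈ Finset.range N, cut a ≤ 2 / N * SS := by
    apply Finset.exists_le_of_sum_le ⟨0, Finset.mem_range.2 hNpos⟩
    rw [hcutsum, Finset.sum_const, Finset.card_range, nsmul_eq_mul]
    rw [show (N:ℝ) * (2 / N * SS) = 2 * SS * (N / N) from by ring, div_self hNR.ne', mul_one]
  obtain ⟨a, haN, hcuta⟩ := hmin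
  -- block quantities at offset a
  set Sd : ℤ → ℝ := fun k => ∑ r : Fin N,
    dd ω ((a:ℤ) + k * N + (r:ℕ)) * U ((a:ℤ) + k * N + (r:ℕ)) * U ((a:ℤ) + k * N + (r:ℕ))
    with hSdDef
  set Sg : ℤ → ℝ := fun k => ∑ r : Fin N, g ((a:ℤ) + k * N + (r:ℕ)) with hSgDef
  set Sq : ℤ → ℝ := fun k => ∑ r : Fin N, U ((a:ℤ) + k * N + (r:ℕ)) ^ 2 with hSqDef
  set Ck : ℤ → ℝ := fun k => 2 * (U ((a:ℤ) + k * N + N - 1) * U ((a:ℤ) + k * N + N)) with hCkDef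
  set Wk : ℤ → ℝ := fun k => Sd k + 2 * Sg k - Ck k with hWkDef
  have hSdsum : HasSum Sd D := hasSum_blocks _ hfd (a:ℤ) hNpos
  have hSgsum : HasSum Sg T := hasSum_blocks g hg (a:ℤ) hNpos
  have hSqsum : HasSum Sq SS := hasSum_blocks _ hsq (a:ℤ) hNpos
  have hCk : Summable Ck := by
    have h1 : Summable (fun k : ℤ => g (((a:ℤ) + N - 1) + k * N)) := hg.comp_injective (hinj _)
    apply (h1.mul_left 2).congr
    intro k
    simp only [hgdef, hCkDef]
    rw [show (a:ℤ) + N - 1 + k * N = (a:ℤ) + k * N + N - 1 from by ring,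
      show (a:ℤ) + k * N + N - 1 + 1 = (a:ℤ) + k * N + N from by ring]
  have hWksummable : Summable Wk :=
    (hSdsum.summable.add (hSgsum.summable.mul_left 2)).sub hCk
  have hWCsum : HasSum (fun k => Wk k + Ck k) (D + 2 * T) := by
    have he : (fun k => Wk k + Ck k) = fun k => Sd k + 2 * Sg k :=
      funext fun k => by simp only [hWkDef]; ring
    rw [he]
    exact hSdsum.add (hSgsum.mul_left 2)
  have hsplitQ : D + 2 * T = (∑' k, Wk k) + ∑' k, Ck k := by
    rw [← hWCsum.tsum_eq, Summable.tsum_add hWksummable hCk]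
  -- Rayleigh bounds on each block
  have hfracx : ∀ k : ℤ, Int.fract ((((a:ℤ) + k * N : ℤ):ℝ) ^ 2 * ω) ∈ Set.Icc (0:ℝ) 1 :=
    fun k => ⟨Int.fract_nonneg _, (Int.fract_lt_one _).le⟩
  have hfracy : ∀ k : ℤ, Int.fract (2 * (((a:ℤ) + k * N : ℤ):ℝ) * ω) ∈ Set.Icc (0:ℝ) 1 :=
    fun k => ⟨Int.fract_nonneg _, (Int.fract_lt_one _).le⟩
  have hdot : ∀ k : ℤ, dotProduct (fun r : Fin N => U ((a:ℤ) + k * N + (r:ℕ)))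
      (fun r : Fin N => U ((a:ℤ) + k * N + (r:ℕ))) = Sq k := by
    intro k
    rw [dotProduct, hSqDef]
    exact Finset.sum_congr rfl fun r _ => (sq (U ((a:ℤ) + k * N + (r:ℕ)))).symm
  have hWform : ∀ k : ℤ, dotProduct (fun r : Fin N => U ((a:ℤ) + k * N + (r:ℕ)))
      ((skewMat ω (Int.fract ((((a:ℤ) + k * N : ℤ):ℝ) ^ 2 * ω))
        (Int.fract (2 * (((a:ℤ) + k * N : ℤ):ℝ) * ω)) N).mulVec
          (fun r : Fin N => U ((a:ℤ) + k * N + (r:ℕ)))) = Wk k := by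
    intro k
    rw [block_quad ω N hNpos U ((a:ℤ) + k * N)]
    simp only [hWkDef, hSdDef, hSgDef, hCkDef, hgdef]
    have e1 : ∑ r : Fin N, dd ω ((a:ℤ) + k * N + (r:ℕ))
        * (U ((a:ℤ) + k * N + (r:ℕ)) * U ((a:ℤ) + k * N + (r:ℕ)))
        = ∑ r : Fin N, dd ω ((a:ℤ) + k * N + (r:ℕ))
        * U ((a:ℤ) + k * N + (r:ℕ)) * U ((a:ℤ) + k * N + (r:ℕ)) :=
      Finset.sum_congr rfl fun r _ => by ring
    rw [e1]
    ring
  have hWle : ∀ k : ℤ, Wk k ≤ lamPlus ω N * Sq k := by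
    intro k
    have h1 := quad_le_lam ω N (hfracx k) (hfracy k) (fun r : Fin N => U ((a:ℤ) + k * N + (r:ℕ)))
    rwa [hWform k, hdot k] at h1
  have hWge : ∀ k : ℤ, -(lamPlus ω N * Sq k) ≤ Wk k := by
    intro k
    have h1 := quad_ge ω N (hfracx k) (hfracy k) (fun r : Fin N => U ((a:ℤ) + k * N + (r:ℕ)))
    rwa [hWform k, hdot k] at h1
  have hUb : HasSum (fun k => lamPlus ω N * Sq k) (lamPlus ω N * SS) := hSqsum.mul_left _
  have hWtsum_le : ∑' k, Wk k ≤ lamPlus ω N * SS := by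
    calc ∑' k, Wk k ≤ ∑' k, lamPlus ω N * Sq k := Summable.tsum_le_tsum hWle hWksummable hUb.summable
      _ = lamPlus ω N * SS := hUb.tsum_eq
  have hWtsum_ge : -(lamPlus ω N * SS) ≤ ∑' k, Wk k := by
    have h2 := Summable.tsum_le_tsum (fun k => hWge k) hUb.summable.neg hWksummable
    rwa [tsum_neg, hUb.tsum_eq] at h2
  -- cut bounds
  have hcutterm : Summable (fun k : ℤ => U ((N:ℤ) - 1 + k * N + a) ^ 2 + U ((N:ℤ) + k * N + a) ^ 2) :=
    (hsummableCA _ a).add (hsummableCA _ a)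
  have hargs : ∀ k : ℤ, ((N:ℤ) - 1 + k * N + a = (a:ℤ) + k * N + N - 1)
      ∧ ((N:ℤ) + k * N + a = (a:ℤ) + k * N + N) := fun k => ⟨by ring, by ring⟩
  have hCle : ∀ k : ℤ, Ck k ≤ U ((N:ℤ) - 1 + k * N + a) ^ 2 + U ((N:ℤ) + k * N + a) ^ 2 := by
    intro k
    simp only [hCkDef]
    rw [(hargs k).1, (hargs k).2]
    nlinarith [sq_nonneg (U ((a:ℤ) + k * N + N - 1) - U ((a:ℤ) + k * N + N))]
  have hCge : ∀ k : ℤ, -(U ((N:ℤ) - 1 + k * N + a) ^ 2 + U ((N:ℤ) + k * N + a) ^ 2) ≤ Ck k := by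
    intro k
    simp only [hCkDef]
    rw [(hargs k).1, (hargs k).2]
    nlinarith [sq_nonneg (U ((a:ℤ) + k * N + N - 1) + U ((a:ℤ) + k * N + N))]
  have hCtsum_le : ∑' k, Ck k ≤ cut a := Summable.tsum_le_tsum hCle hCk hcutterm
  have hCtsum_ge : -(cut a) ≤ ∑' k, Ck k := by
    have h2 := Summable.tsum_le_tsum (fun k => hCge k) hcutterm.neg hCk
    rwa [tsum_neg] at h2
  -- conclusion
  have hcutnn : 0 ≤ cut a := tsum_nonneg fun k => by positivity
  rw [hinner, hnorm, add_mul]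
  have h2N : 2 / (N:ℝ) * SS = 2 / N * SS := rfl
  apply abs_le.2
  constructor
  · rw [hsplitQ]
    have : -(2 / (N:ℝ) * SS) ≤ -(cut a) := by linarith
    linarith
  · rw [hsplitQ]
    linarith



lemma opNorm_le (N : ℕ) (hN : 2 ≤ N) : ‖H‖ ≤ lamPlus ω N + 2 / N := by
  have hNpos : 0 < N := by omega
  have hc : 0 ≤ lamPlus ω N + 2 / N := by
    have h2 := two_le_lamPlus ω N hNpos
    have : (0:ℝ) ≤ 2 / N := by positivity
    linarith
  set c := lamPlus ω N + 2 / N with hcdef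
  apply ContinuousLinearMap.opNorm_le_bound _ hc
  intro u
  by_cases hu : H u = 0
  · rw [hu, norm_zero]
    positivity
  · have hpar : ∀ v w : l2Z, 4 * (inner ℝ (H v) w : ℝ) ≤ 2 * c * (‖v‖^2 + ‖w‖^2) := by
      intro v w
      have hsymmvw : (inner ℝ (H w) v : ℝ) = inner ℝ (H v) w := by
        rw [symmQ ω H hH w v]
        exact real_inner_comm _ _
      have h1 : (inner ℝ (H (v+w)) (v+w) : ℝ) - (inner ℝ (H (v-w)) (v-w) : ℝ)
          = 4 * (inner ℝ (H v) w : ℝ) := by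
        rw [map_add, map_sub]
        rw [inner_add_left, inner_sub_left, inner_add_right, inner_add_right,
          inner_sub_right, inner_sub_right]
        linarith [hsymmvw]
      have h2 := abs_le.1 (quad_bound ω H hH N hN (v+w))
      have h3 := abs_le.1 (quad_bound ω H hH N hN (v-w))
      rw [← hcdef] at h2 h3
      have hpl := parallelogram_law_with_norm ℝ v w
      have e1 : ‖v+w‖^2 = ‖v+w‖*‖v+w‖ := sq (‖v+w‖)
      have e2 : ‖v-w‖^2 = ‖v-w‖*‖v-w‖ := sq (‖v-w‖)
      have e3 : ‖v‖^2 = ‖v‖*‖v‖ := sq _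
      have e4 : ‖w‖^2 = ‖w‖*‖w‖ := sq _
      have hpl2 : ‖v+w‖^2 + ‖v-w‖^2 = 2*(‖v‖^2+‖w‖^2) := hpl
      have hplc : c * ‖v+w‖^2 + c * ‖v-w‖^2 = 2*c*(‖v‖^2+‖w‖^2) := by
        linear_combination c * hpl2
      linarith [h1, h2.2, h3.1, hplc]
    have hHu : (0:ℝ) < ‖H u‖ := norm_pos_iff.2 hu
    by_cases hu0 : u = 0
    · exfalso; apply hu; rw [hu0, map_zero]
    have hun : (0:ℝ) < ‖u‖ := norm_pos_iff.2 hu0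
    set w : l2Z := (‖u‖ / ‖H u‖) • H u with hwdef
    have hwnorm : ‖w‖ = ‖u‖ := by
      rw [hwdef, norm_smul, Real.norm_eq_abs, abs_div, abs_norm, abs_norm]
      field_simp
    have hiw : (inner ℝ (H u) w : ℝ) = (‖u‖ / ‖H u‖) * ‖H u‖^2 := by
      rw [hwdef, real_inner_smul_right, real_inner_self_eq_norm_sq]
    have hp := hpar u w
    rw [hiw, hwnorm] at hp
    have hkey : ‖u‖ * ‖H u‖ ≤ c * ‖u‖^2 := by
      have : (‖u‖ / ‖H u‖) * ‖H u‖^2 = ‖u‖ * ‖H u‖ := by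
        field_simp
      rw [this] at hp
      linarith
    have h12 : ‖H u‖ * ‖u‖ ≤ (c * ‖u‖) * ‖u‖ := by
      calc ‖H u‖ * ‖u‖ = ‖u‖ * ‖H u‖ := mul_comm _ _
        _ ≤ c * ‖u‖^2 := hkey
        _ = (c * ‖u‖) * ‖u‖ := by ring
    exact le_of_mul_le_mul_right h12 hun

end Aux6


theorem stmt10 (ω : ℝ) (H : l2Z →L[ℝ] l2Z)
    (hH : ∀ u : l2Z, ∀ n : ℤ,
      H u n = 2 * Real.cos (2 * Real.pi * (n : ℝ) ^ 2 * ω) * u n + u (n + 1) + u (n - 1))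
    (N : ℕ) (hN : 2 ≤ N) :
    spectrum ℝ H ⊆ Set.Icc (-(lamPlus ω N + 2 / N)) (lamPlus ω N + 2 / N) := by
  have hnorm : ‖H‖ ≤ lamPlus ω N + 2 / N := Aux6.opNorm_le ω H hH N hN
  intro z hz
  have h1 := spectrum.subset_closedBall_norm_mul H hz
  rw [Metric.mem_closedBall, Real.dist_eq, sub_zero] at h1
  have hone : ‖(1 : l2Z →L[ℝ] l2Z)‖ ≤ 1 := by
    rw [ContinuousLinearMap.one_def]
    exact ContinuousLinearMap.norm_id_le
  have hc : 0 ≤ lamPlus ω N + 2 / N := le_trans (norm_nonneg H) hnorm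
  have h2 : |z| ≤ lamPlus ω N + 2 / N := by
    calc |z| ≤ ‖H‖ * ‖(1 : l2Z →L[ℝ] l2Z)‖ := h1
      _ ≤ (lamPlus ω N + 2 / N) * 1 := mul_le_mul hnorm hone (norm_nonneg _) hc
      _ = lamPlus ω N + 2 / N := mul_one _
  exact Set.mem_Icc.2 (abs_le.1 h2)
end
end

section
/- Let H = V + Δ on ℓ²(ℤ) with bounded potential and suppose η ∈ ℓ²(ℤ) is finitely supported with ‖η‖ = 1 and ‖Hη - Eη‖ < ε/4 for some E ∈ ℝ and 0 < ε < 1. Then for any N ≥ 2 there exists a ∈ ℤ such that, writing I = [a, a+N-1] and η' for the restriction of η to I, one has ‖H_I η' - E η'‖² < (2+ε)/N·‖η'‖² + (ε²/16)·‖η'‖². -/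
noncomputable section

lemma l2_normsq_eq (f : l2Z) (F : Finset ℤ) (h : ∀ n ∉ F, f n = 0) :
    ‖f‖ ^ 2 = ∑ n ∈ F, (f n) ^ 2 := by
  have h2 : (0:ℝ) < (2 : ENNReal).toReal := by norm_num
  have := lp.norm_rpow_eq_tsum h2 f
  simp only [ENNReal.toReal_ofNat] at this
  rw [tsum_eq_sum (s := F) (by intro n hn; rw [h n hn]; simp)] at this
  calc ‖f‖ ^ 2 = ‖f‖ ^ (2:ℝ) := by rw [← Real.rpow_natCast]; norm_num
  _ = ∑ n ∈ F, ‖f n‖ ^ (2:ℝ) := this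
  _ = ∑ n ∈ F, (f n)^2 := by
      refine Finset.sum_congr rfl fun n _ => ?_
      rw [← Real.rpow_natCast]; norm_num [Real.norm_eq_abs, sq_abs]

lemma l2_sum_sq_le (f : l2Z) (F G : Finset ℤ) (h : ∀ n ∉ G, f n = 0) :
    ∑ n ∈ F, (f n) ^ 2 ≤ ‖f‖ ^ 2 := by
  rw [l2_normsq_eq f (F ∪ G) (fun n hn => h n (fun hG => hn (Finset.mem_union_right _ hG)))]
  exact Finset.sum_le_sum_of_subset_of_nonneg Finset.subset_union_left
    (fun n _ _ => sq_nonneg _)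

lemma sub_sq_sum_le {T : Finset ℤ} {x y : ℤ → ℝ} {A B : ℝ} (hA : 0 ≤ A) (hB : 0 ≤ B)
    (hx : ∑ a ∈ T, (x a) ^ 2 ≤ A ^ 2) (hy : ∑ a ∈ T, (y a) ^ 2 ≤ B ^ 2) :
    ∑ a ∈ T, (x a - y a) ^ 2 ≤ (A + B) ^ 2 := by
  have hcs := Finset.sum_mul_sq_le_sq_mul_sq T x y
  have hexp : ∑ a ∈ T, (x a - y a) ^ 2
      = ∑ a ∈ T, (x a)^2 - 2 * ∑ a ∈ T, (x a * y a) + ∑ a ∈ T, (y a)^2 := by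
    rw [Finset.mul_sum, ← Finset.sum_sub_distrib, ← Finset.sum_add_distrib]
    exact Finset.sum_congr rfl fun a _ => by ring
  have hx0 : (0:ℝ) ≤ ∑ a ∈ T, (x a)^2 := Finset.sum_nonneg fun a _ => sq_nonneg _
  have hy0 : (0:ℝ) ≤ ∑ a ∈ T, (y a)^2 := Finset.sum_nonneg fun a _ => sq_nonneg _
  nlinarith [sq_nonneg (∑ a ∈ T, x a * y a), sq_nonneg (A*B), sq_nonneg (A-B), sq_nonneg (A+B),
    mul_nonneg hA hB]

lemma jacobi_mulVec (V : ℤ → ℝ) (a : ℤ) (N : ℕ) (x : Fin N → ℝ) (i : Fin N) :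
    (jacobi V a N).mulVec x i =
      V (a + (i:ℕ)) * x i + (if h : (i:ℕ)+1 < N then x ⟨(i:ℕ)+1, h⟩ else 0)
        + (if h : 0 < (i:ℕ) then x ⟨(i:ℕ)-1, lt_of_le_of_lt (Nat.pred_le _) i.isLt⟩ else 0) := by
  unfold Matrix.mulVec dotProduct jacobi
  have hsplit : ∀ j : Fin N,
      (if (i : ℕ) = (j : ℕ) then V (a + (i : ℕ))
        else if (i : ℕ) + 1 = (j : ℕ) ∨ (j : ℕ) + 1 = (i : ℕ) then 1 else 0) * x j
      = (if i = j then V (a + (i:ℕ)) * x j else 0)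
        + (if (i:ℕ)+1 = (j:ℕ) then x j else 0) + (if (j:ℕ)+1 = (i:ℕ) then x j else 0) := by
    intro j
    rcases eq_or_ne i j with rfl | hne
    · simp [show ¬((i:ℕ)+1 = (i:ℕ)) by omega]
    · have : ¬ (i:ℕ) = (j:ℕ) := fun h => hne (Fin.ext h)
      simp only [this, if_false, if_neg hne]
      by_cases h1 : (i:ℕ)+1 = (j:ℕ) <;> by_cases h2 : (j:ℕ)+1 = (i:ℕ) <;>
        simp [h1, h2] <;> omega
  rw [Finset.sum_congr rfl fun j _ => hsplit j]
  rw [Finset.sum_add_distrib, Finset.sum_add_distrib]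
  congr 1
  · congr 1
    · rw [Finset.sum_ite_eq Finset.univ i (fun j => V (a + (i:ℕ)) * x j)]
      simp
    · by_cases h : (i:ℕ)+1 < N
      · rw [Finset.sum_eq_single (⟨(i:ℕ)+1, h⟩ : Fin N), if_pos rfl, dif_pos h]
        · intro j _ hj
          rw [if_neg]
          exact fun hc => hj (by ext; simp [← hc])
        · simp
      · rw [dif_neg h, Finset.sum_eq_zero]
        intro j _
        rw [if_neg]
        exact fun hc => h (hc ▸ j.isLt)
  · by_cases h : 0 < (i:ℕ)
    · rw [Finset.sum_eq_single (⟨(i:ℕ)-1, lt_of_le_of_lt (Nat.pred_le _) i.isLt⟩ : Fin N),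
        dif_pos h, if_pos (by simp; omega)]
      · intro j _ hj
        rw [if_neg]
        intro hc
        exact hj (by ext; simp; omega)
      · simp
    · rw [dif_neg h, Finset.sum_eq_zero]
      intro j _
      rw [if_neg]
      omega
theorem stmt15 (V : ℤ → ℝ) (hV : ∃ C, ∀ n, |V n| ≤ C)
    (H : l2Z →L[ℝ] l2Z)
    (hH : ∀ u : l2Z, ∀ n : ℤ, H u n = V n * u n + u (n + 1) + u (n - 1))
    (η : l2Z) (hsupp : ∃ S : Finset ℤ, ∀ n ∉ S, η n = 0) (hnorm : ‖η‖ = 1)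
    (E ε : ℝ) (hε : 0 < ε ∧ ε < 1) (hclose : ‖H η - E • η‖ < ε / 4)
    (N : ℕ) (hN : 2 ≤ N) :
    ∃ a : ℤ,
      (fun η' : EuclideanSpace ℝ (Fin N) =>
        ‖Matrix.toEuclideanLin (jacobi V a N) η' - E • η'‖ ^ 2 <
          (2 + ε) / N * ‖η'‖ ^ 2 + ε ^ 2 / 16 * ‖η'‖ ^ 2)
      (WithLp.toLp 2 (fun j : Fin N => η (a + (j : ℕ)))) := by
  obtain ⟨S, hS⟩ := hsupp
  obtain ⟨hε0, hε1⟩ := hε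
  set δ : l2Z := H η - E • η with hδdef
  set dd : ℤ → ℝ := fun n => H η n - E * η n with hdd
  have hδcoe : ∀ n : ℤ, (δ : ∀ _ : ℤ, ℝ) n = dd n := by
    intro n
    simp [hδdef, hdd, lp.coeFn_sub, lp.coeFn_smul]; rfl
  have hddval : ∀ n : ℤ, dd n = V n * η n + η (n+1) + η (n-1) - E * η n := by
    intro n; rw [hdd]; simp [hH η n]
  -- the vector v a
  set v : ℤ → EuclideanSpace ℝ (Fin N) := fun a => WithLp.toLp 2 (fun j : Fin N => η (a + (j : ℕ))) with hv
  -- the error coordinates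
  set w : ℤ → ℕ → ℝ := fun a i =>
    dd (a + (i:ℤ)) - (if i = 0 then η (a-1) else 0) - (if i = N-1 then η (a + N) else 0)
    with hw
  have key : ∀ a : ℤ,
      ‖Matrix.toEuclideanLin (jacobi V a N) (v a) - E • (v a)‖ ^ 2
        = ∑ i ∈ Finset.range N, (w a i) ^ 2 := by
    intro a
    have coordeq : ∀ i : Fin N,
        ‖(Matrix.toEuclideanLin (jacobi V a N) (v a) - E • (v a)) i‖^2 = (w a (i:ℕ))^2 := by
      intro i
      rw [Real.norm_eq_abs, sq_abs]
      congr 1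
      have hcoord : (Matrix.toEuclideanLin (jacobi V a N) (v a) - E • (v a)) i
          = (jacobi V a N).mulVec (v a) i - E * (v a) i := rfl
      rw [hcoord, jacobi_mulVec, hw]
      simp only [hv]
      rw [hddval]
      rcases Nat.eq_zero_or_pos (i:ℕ) with h0 | h0
      · have h1 : (i:ℕ) + 1 < N := by omega
        have hne : (i:ℕ) ≠ N - 1 := by omega
        rw [dif_pos h1, dif_neg (by omega), if_pos h0, if_neg hne]
        rw [show ((((i:ℕ)+1 : ℕ)) : ℤ) = ((i:ℕ):ℤ) + 1 by push_cast; ring]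
        rw [show a + ((i:ℕ):ℤ) - 1 = a - 1 by omega]
        rw [show a + (((i:ℕ):ℤ) + 1) = a + ((i:ℕ):ℤ) + 1 by ring]
        ring
      · rcases Nat.lt_or_ge ((i:ℕ)+1) N with h1 | h1
        · have hne0 : (i:ℕ) ≠ 0 := by omega
          have hne : (i:ℕ) ≠ N - 1 := by omega
          rw [dif_pos h1, dif_pos h0, if_neg hne0, if_neg hne]
          have hc1 : ((((i:ℕ)+1 : ℕ)) : ℤ) = (i:ℕ) + 1 := by push_cast; ring
          have hc2 : ((((i:ℕ)-1 : ℕ)) : ℤ) = (i:ℕ) - 1 := by omega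
          rw [hc1, hc2, show a + (((i:ℕ):ℤ) + 1) = a + ((i:ℕ):ℤ) + 1 by ring,
            show a + (((i:ℕ):ℤ) - 1) = a + ((i:ℕ):ℤ) - 1 by ring]
          ring
        · have hne0 : (i:ℕ) ≠ 0 := by omega
          have hie : (i:ℕ) = N - 1 := by omega
          rw [dif_neg (by omega), dif_pos h0, if_neg hne0, if_pos hie]
          have hc2 : ((((i:ℕ)-1 : ℕ)) : ℤ) = (i:ℕ) - 1 := by omega
          have hc3 : a + (i:ℕ) + 1 = a + (N:ℕ) := by omega
          rw [hc2, show a + (((i:ℕ):ℤ) - 1) = a + ((i:ℕ):ℤ) - 1 by ring, hc3]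
          ring
    rw [EuclideanSpace.norm_eq, Real.sq_sqrt (Finset.sum_nonneg fun i _ => sq_nonneg _)]
    rw [show ∑ i : Fin N, ‖(Matrix.toEuclideanLin (jacobi V a N) (v a) - E • (v a)) i‖^2
        = ∑ i : Fin N, (w a (i:ℕ))^2 from Finset.sum_congr rfl fun i _ => coordeq i]
    exact Fin.sum_univ_eq_sum_range (fun i : ℕ => (w a i)^2) N
  have normv : ∀ a : ℤ, ‖v a‖^2 = ∑ i ∈ Finset.range N, (η (a + (i:ℤ)))^2 := by
    intro a
    rw [EuclideanSpace.norm_eq, Real.sq_sqrt (Finset.sum_nonneg fun i _ => sq_nonneg _)]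
    rw [show ∑ i : Fin N, ‖(v a) i‖^2 = ∑ i : Fin N, (η (a + ((i:ℕ):ℤ)))^2 from
      Finset.sum_congr rfl fun i _ => by rw [Real.norm_eq_abs, sq_abs]]
    exact Fin.sum_univ_eq_sum_range (fun i : ℕ => (η (a + ((i:ℕ):ℤ)))^2) N
  -- nonempty support
  have hηne : ∃ n, η n ≠ 0 := by
    by_contra hc
    push_neg at hc
    have : η = 0 := by
      ext n
      simp [hc n]
    rw [this] at hnorm
    simp at hnorm
  have hSne : S.Nonempty := by
    obtain ⟨n, hn⟩ := hηne
    exact ⟨n, by by_contra h; exact hn (hS n h)⟩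
  set T : Finset ℤ := Finset.Icc (S.min' hSne - N) (S.max' hSne + N) with hT
  -- support superset for δ
  set G : Finset ℤ := (S ∪ S.map (Equiv.toEmbedding (Equiv.addRight (-1:ℤ)))) ∪
      S.map (Equiv.toEmbedding (Equiv.addRight (1:ℤ))) with hG
  have hδsupp : ∀ n ∉ G, (δ : ∀ _ : ℤ, ℝ) n = 0 := by
    intro n hn
    rw [hδcoe, hddval]
    have h1 : n ∉ S := fun h => hn (by simp [hG, Finset.mem_union]; tauto)
    have h2 : n + 1 ∉ S := by
      intro h
      apply hn
      simp only [hG, Finset.mem_union, Finset.mem_map, Equiv.coe_toEmbedding,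
        Equiv.coe_addRight]
      exact Or.inl (Or.inr ⟨n+1, h, by ring⟩)
    have h3 : n - 1 ∉ S := by
      intro h
      apply hn
      simp only [hG, Finset.mem_union, Finset.mem_map, Equiv.coe_toEmbedding,
        Equiv.coe_addRight]
      exact Or.inr ⟨n-1, h, by ring⟩
    rw [hS n h1, hS _ h2, hS _ h3]
    ring
  -- shifted sums
  have sum_shift : ∀ (c : ℤ) (f : ℤ → ℝ),
      ∑ a ∈ T, f (a + c) = ∑ n ∈ T.map (Equiv.toEmbedding (Equiv.addRight c)), f n := by
    intro c f
    rw [Finset.sum_map]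
    simp
  have dd_bound : ∀ c : ℤ, ∑ a ∈ T, (dd (a + c))^2 ≤ ‖δ‖^2 := by
    intro c
    have : ∀ n, dd n = (δ : ∀ _ : ℤ, ℝ) n := fun n => (hδcoe n).symm
    calc ∑ a ∈ T, (dd (a + c))^2
        = ∑ n ∈ T.map (Equiv.toEmbedding (Equiv.addRight c)), ((δ : ∀ _ : ℤ, ℝ) n)^2 := by
          rw [← sum_shift]; exact Finset.sum_congr rfl fun a _ => by rw [this]
      _ ≤ ‖δ‖^2 := l2_sum_sq_le δ _ G hδsupp
  have eta_bound : ∀ c : ℤ, ∑ a ∈ T, (η (a + c))^2 ≤ 1 := by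
    intro c
    calc ∑ a ∈ T, (η (a + c))^2
        = ∑ n ∈ T.map (Equiv.toEmbedding (Equiv.addRight c)), (η n)^2 := sum_shift c (fun n => (η n)^2)
      _ ≤ ‖η‖^2 := l2_sum_sq_le η _ S hS
      _ = 1 := by rw [hnorm]; norm_num
  have eta_exact : ∀ i ∈ Finset.range N, ∑ a ∈ T, (η (a + (i:ℤ)))^2 = 1 := by
    intro i hi
    rw [Finset.mem_range] at hi
    have hsub : ∀ n ∈ S, n ∈ T.map (Equiv.toEmbedding (Equiv.addRight (i:ℤ))) := by
      intro n hn
      simp only [Finset.mem_map, Equiv.coe_toEmbedding, Equiv.coe_addRight]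
      refine ⟨n - i, ?_, by ring⟩
      rw [hT, Finset.mem_Icc]
      constructor
      · have := S.min'_le n hn; omega
      · have := S.le_max' n hn; omega
    calc ∑ a ∈ T, (η (a + (i:ℤ)))^2
        = ∑ n ∈ T.map (Equiv.toEmbedding (Equiv.addRight (i:ℤ))), (η n)^2 := sum_shift (i:ℤ) (fun n => (η n)^2)
      _ = ‖η‖^2 := (l2_normsq_eq η _ (fun n hn => hS n (fun h => hn (hsub n h)))).symm
      _ = 1 := by rw [hnorm]; norm_num
  -- main argument
  by_contra hcon
  push_neg at hcon
  -- sum of RHS over T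
  have hNR : (0:ℝ) < N := by positivity
  have hRHS : ∑ a ∈ T, ((2 + ε) / N * ‖v a‖^2 + ε^2/16 * ‖v a‖^2)
      = (2 + ε) + N * (ε^2/16) := by
    have hvsum : ∑ a ∈ T, ‖v a‖^2 = N := by
      calc ∑ a ∈ T, ‖v a‖^2 = ∑ a ∈ T, ∑ i ∈ Finset.range N, (η (a + (i:ℤ)))^2 := by
            exact Finset.sum_congr rfl fun a _ => normv a
        _ = ∑ i ∈ Finset.range N, ∑ a ∈ T, (η (a + (i:ℤ)))^2 := Finset.sum_comm
        _ = ∑ i ∈ Finset.range N, (1:ℝ) := Finset.sum_congr rfl eta_exact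
        _ = N := by simp
    calc ∑ a ∈ T, ((2 + ε) / N * ‖v a‖^2 + ε^2/16 * ‖v a‖^2)
        = ((2 + ε) / N + ε^2/16) * ∑ a ∈ T, ‖v a‖^2 := by
          rw [Finset.mul_sum]
          exact Finset.sum_congr rfl fun a _ => by ring
      _ = ((2 + ε) / N + ε^2/16) * N := by rw [hvsum]
      _ = (2 + ε) + N * (ε^2/16) := by field_simp
  -- bound the LHS sum
  set K : ℝ := (‖δ‖ + 1)^2 - ‖δ‖^2 with hK
  have hK0 : 0 ≤ K := by rw [hK]; nlinarith [norm_nonneg δ]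
  have per_i : ∀ i ∈ Finset.range N, ∑ a ∈ T, (w a i)^2
      ≤ ‖δ‖^2 + ((if i = 0 then K else 0) + (if i = N-1 then K else 0)) := by
    intro i hi
    rw [Finset.mem_range] at hi
    rcases eq_or_ne i 0 with rfl | hi0
    · have hne : (0:ℕ) ≠ N - 1 := by omega
      rw [if_pos rfl, if_neg hne]
      have : ∀ a : ℤ, w a 0 = dd (a + (0:ℤ)) - η (a + (-1:ℤ)) := by
        intro a
        rw [hw]
        simp only [if_pos rfl, if_neg hne]
        rw [show a + (-1:ℤ) = a - 1 by ring]
        norm_num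
      calc ∑ a ∈ T, (w a 0)^2 = ∑ a ∈ T, (dd (a + (0:ℤ)) - η (a + (-1:ℤ)))^2 :=
            Finset.sum_congr rfl fun a _ => by rw [this]
        _ ≤ (‖δ‖ + 1)^2 := sub_sq_sum_le (norm_nonneg δ) zero_le_one (dd_bound 0)
            (by simpa using eta_bound (-1))
        _ = ‖δ‖^2 + (K + 0) := by rw [hK]; ring
    · rcases eq_or_ne i (N-1) with rfl | hi1
      · rw [if_neg hi0, if_pos rfl]
        have : ∀ a : ℤ, w a (N-1) = dd (a + ((N-1:ℕ):ℤ)) - η (a + (N:ℤ)) := by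
          intro a
          rw [hw]
          simp only [if_pos rfl, if_neg hi0]
          norm_num
        calc ∑ a ∈ T, (w a (N-1))^2
            = ∑ a ∈ T, (dd (a + ((N-1:ℕ):ℤ)) - η (a + (N:ℤ)))^2 :=
              Finset.sum_congr rfl fun a _ => by rw [this]
          _ ≤ (‖δ‖ + 1)^2 := sub_sq_sum_le (norm_nonneg δ) zero_le_one (dd_bound _)
              (by simpa using eta_bound N)
          _ = ‖δ‖^2 + (0 + K) := by rw [hK]; ring
      · rw [if_neg hi0, if_neg hi1]
        have : ∀ a : ℤ, w a i = dd (a + (i:ℤ)) := by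
          intro a
          rw [hw]
          simp only [if_neg hi0, if_neg hi1]
          ring
        calc ∑ a ∈ T, (w a i)^2 = ∑ a ∈ T, (dd (a + (i:ℤ)))^2 :=
              Finset.sum_congr rfl fun a _ => by rw [this]
          _ ≤ ‖δ‖^2 := dd_bound _
          _ = ‖δ‖^2 + (0 + 0) := by ring
  have hLHS : ∑ a ∈ T, ∑ i ∈ Finset.range N, (w a i)^2 ≤ N * ‖δ‖^2 + 2 * K := by
    rw [Finset.sum_comm]
    calc ∑ i ∈ Finset.range N, ∑ a ∈ T, (w a i)^2
        ≤ ∑ i ∈ Finset.range N,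
            (‖δ‖^2 + ((if i = 0 then K else 0) + (if i = N-1 then K else 0))) :=
          Finset.sum_le_sum per_i
      _ = N * ‖δ‖^2 + 2 * K := by
          rw [Finset.sum_add_distrib, Finset.sum_add_distrib]
          rw [Finset.sum_ite_eq' (Finset.range N) 0 (fun _ => K),
            Finset.sum_ite_eq' (Finset.range N) (N-1) (fun _ => K)]
          have h0 : (0:ℕ) ∈ Finset.range N := by simp; omega
          have h1 : N-1 ∈ Finset.range N := by simp; omega
          rw [if_pos h0, if_pos h1]
          simp
          ring
  -- combine
  have hmono : ∑ a ∈ T, ((2 + ε) / N * ‖v a‖^2 + ε^2/16 * ‖v a‖^2)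
      ≤ ∑ a ∈ T, ∑ i ∈ Finset.range N, (w a i)^2 := by
    refine Finset.sum_le_sum fun a _ => ?_
    rw [← key a]
    exact hcon a
  rw [hRHS] at hmono
  have hfinal := le_trans hmono hLHS
  have hd2 : ‖δ‖^2 ≤ (ε/4)^2 :=
    pow_le_pow_left₀ (norm_nonneg δ) (le_of_lt hclose) 2
  have hN2 : (0:ℝ) ≤ (N:ℝ) - 2 := by
    have : (2:ℝ) ≤ (N:ℝ) := by exact_mod_cast hN
    linarith
  nlinarith [mul_nonneg hN2 (sub_nonneg.2 hd2), norm_nonneg δ, hclose, hε0,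
    mul_pos (sub_pos.2 hclose) (by linarith [norm_nonneg δ] : (0:ℝ) < ε/4 + ‖δ‖ + 2)]
end
end
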